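/- arXiv:1607.06655 — 8 statements merged into one kernel-verified Lean document; each statement's English description precedes it below -/
import Mathlib

section
/- Let X be a finite metric space and m ≤ #X. For a partition D = {X₁,…,Xₘ} of X into m nonempty parts and λ > 0, the correspondence R_D between the simplex λΔₘ (m points at mutual distance λ) and X defined by R_D = ⋃ᵢ {i} × Xᵢ has distortion dis R_D = max(diam D, λ - α(D), β(D) - λ), where diam D = maxᵢ diam Xᵢ, α(D) = min_{i≠j} inf{dist(x,y) : x ∈ Xᵢ, y ∈ Xⱼ}, and β(D) = max_{i≠j} sup{dist(x,y) : x ∈ Xᵢ, y ∈ Xⱼ}. -/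
open scoped Classical

/-- `P` is a partition of `X` into `m` nonempty parts. -/
def IsPartition {X : Type*} {m : ℕ} (P : Fin m → Set X) : Prop :=
  (∀ i, (P i).Nonempty) ∧ (Pairwise fun i j => Disjoint (P i) (P j)) ∧
    (⋃ i, P i) = Set.univ

/-- `diam D`: the maximum of the diameters of the parts. -/
noncomputable def diamD {X : Type*} [MetricSpace X] {m : ℕ} (P : Fin m → Set X) : ℝ :=
  ⨆ i, Metric.diam (P i)

/-- `α(D)`: the minimum over pairs of distinct parts of the infimum distance between them. -/
noncomputable def alphaD {X : Type*} [MetricSpace X] {m : ℕ} (P : Fin m → Set X) : ℝ :=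
  sInf {r : ℝ | ∃ i j, i ≠ j ∧ ∃ x ∈ P i, ∃ y ∈ P j, r = dist x y}

/-- `β(D)`: the maximum over pairs of distinct parts of the supremum distance between them. -/
noncomputable def betaD {X : Type*} [MetricSpace X] {m : ℕ} (P : Fin m → Set X) : ℝ :=
  sSup {r : ℝ | ∃ i j, i ≠ j ∧ ∃ x ∈ P i, ∃ y ∈ P j, r = dist x y}

theorem stmt_7 {X : Type*} [MetricSpace X] [Fintype X] {m : ℕ} (hm : 2 ≤ m)
    (hmX : m ≤ Fintype.card X) {lam : ℝ} (hl : 0 < lam)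
    (P : Fin m → Set X) (hP : IsPartition P) :
    sSup {r : ℝ | ∃ i j, ∃ x ∈ P i, ∃ y ∈ P j,
        r = |(if i = j then (0 : ℝ) else lam) - dist x y|} =
      max (diamD P) (max (lam - alphaD P) (betaD P - lam)) := by
  obtain ⟨hne, hdisj, hcover⟩ := hP
  have hnem : Nonempty (Fin m) := ⟨⟨0, by omega⟩⟩
  set S := {r : ℝ | ∃ i j, ∃ x ∈ P i, ∃ y ∈ P j,
      r = |(if i = j then (0 : ℝ) else lam) - dist x y|} with hSdef
  set T := {r : ℝ | ∃ i j, i ≠ j ∧ ∃ x ∈ P i, ∃ y ∈ P j, r = dist x y} with hTdef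
  have hα : alphaD P = sInf T := rfl
  have hβ : betaD P = sSup T := rfl
  have hSfin : S.Finite := by
    apply Set.Finite.subset (Set.finite_range
      (fun p : (Fin m × X) × (Fin m × X) =>
        |(if p.1.1 = p.2.1 then (0:ℝ) else lam) - dist p.1.2 p.2.2|))
    rintro r ⟨i, j, x, hx, y, hy, rfl⟩
    exact ⟨((i, x), (j, y)), rfl⟩
  have hTfin : T.Finite := by
    apply Set.Finite.subset (Set.finite_range (fun p : X × X => dist p.1 p.2))
    rintro r ⟨i, j, hij, x, hx, y, hy, rfl⟩
    exact ⟨(x, y), rfl⟩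
  set i0 : Fin m := ⟨0, by omega⟩
  set i1 : Fin m := ⟨1, by omega⟩
  have hi01 : i0 ≠ i1 := by simp [i0, i1, Fin.ext_iff]
  obtain ⟨x0, hx0⟩ := hne i0
  obtain ⟨y1, hy1⟩ := hne i1
  have hTne : T.Nonempty := ⟨dist x0 y1, i0, i1, hi01, x0, hx0, y1, hy1, rfl⟩
  have hSne : S.Nonempty :=
    ⟨|(if i0 = i1 then (0:ℝ) else lam) - dist x0 y1|, i0, i1, x0, hx0, y1, hy1, rfl⟩
  have hle : ∀ r ∈ S, r ≤ sSup S := fun r hr => le_csSup hSfin.bddAbove hr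
  have h0sup : 0 ≤ sSup S := by
    obtain ⟨r, hr⟩ := hSne
    have h0r : 0 ≤ r := by
      obtain ⟨i, j, x, hx, y, hy, rfl⟩ := hr
      exact abs_nonneg _
    exact h0r.trans (hle r hr)
  have hdmem : ∀ (i : Fin m) (x y : X), x ∈ P i → y ∈ P i → dist x y ∈ S := by
    intro i x y hx hy
    exact ⟨i, i, x, hx, y, hy, by rw [if_pos rfl]; simp [abs_of_nonneg dist_nonneg]⟩
  apply le_antisymm
  · apply csSup_le hSne
    rintro r ⟨i, j, x, hx, y, hy, rfl⟩
    by_cases hij : i = j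
    · subst hij
      rw [if_pos rfl]
      have h1 : |(0:ℝ) - dist x y| = dist x y := by
        simp [abs_of_nonneg dist_nonneg]
      rw [h1]
      have h2 : dist x y ≤ Metric.diam (P i) :=
        Metric.dist_le_diam_of_mem (Set.toFinite (P i)).isBounded hx hy
      have h3 : Metric.diam (P i) ≤ diamD P :=
        le_ciSup (Set.Finite.bddAbove (Set.finite_range fun i => Metric.diam (P i))) i
      exact le_trans (le_trans h2 h3) (le_max_left _ _)
    · rw [if_neg hij]
      have hdT : dist x y ∈ T := ⟨i, j, hij, x, hx, y, hy, rfl⟩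
      have hA : alphaD P ≤ dist x y := hα ▸ csInf_le hTfin.bddBelow hdT
      have hB : dist x y ≤ betaD P := hβ ▸ le_csSup hTfin.bddAbove hdT
      rw [abs_sub_le_iff]
      constructor
      · calc lam - dist x y ≤ lam - alphaD P := by linarith
          _ ≤ _ := le_trans (le_max_left _ _) (le_max_right _ _)
      · calc dist x y - lam ≤ betaD P - lam := by linarith
          _ ≤ _ := le_trans (le_max_right _ _) (le_max_right _ _)
  · apply max_le
    · apply ciSup_le
      intro i
      apply Metric.diam_le_of_forall_dist_le h0sup
      intro x hx y hy
      exact hle _ (hdmem i x y hx hy)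
    · apply max_le
      · have hmem : alphaD P ∈ T := hα ▸ hTne.csInf_mem hTfin
        obtain ⟨i, j, hij, x, hx, y, hy, heq⟩ := hmem
        have hmS : |lam - dist x y| ∈ S := ⟨i, j, x, hx, y, hy, by rw [if_neg hij]⟩
        have h1 : lam - alphaD P ≤ |lam - dist x y| := by
          rw [heq]; exact le_abs_self _
        exact h1.trans (hle _ hmS)
      · have hmem : betaD P ∈ T := hβ ▸ hTne.csSup_mem hTfin
        obtain ⟨i, j, hij, x, hx, y, hy, heq⟩ := hmem
        have hmS : |lam - dist x y| ∈ S := ⟨i, j, x, hx, y, hy, by rw [if_neg hij]⟩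
        have h1 : betaD P - lam ≤ |lam - dist x y| := by
          rw [heq, abs_sub_comm]; exact le_abs_self _
        exact h1.trans (hle _ hmS)
end

section
/- Let M be a finite metric space with n points, let m > n be an integer, and λ > 0. Then 2·d_GH(λΔₘ, M) = max(λ, diam M - λ), where d_GH is the Gromov–Hausdorff distance and λΔₘ is the m-point simplex with all nonzero distances equal to λ. -/
open scoped Classical
set_option linter.unusedSectionVars false

/-- The simplex `λΔₘ`: `m` points with all nonzero distances equal to `lam`. -/
noncomputable def simplexMetric (m : ℕ) (lam : ℝ) (hl : 0 < lam) : MetricSpace (Fin m) where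
  dist x y := if x = y then 0 else lam
  dist_self x := if_pos rfl
  dist_comm x y := by
    by_cases h : x = y
    · simp [h]
    · simp [h, Ne.symm h]
  dist_triangle x y z := by
    by_cases hxz : x = z <;> by_cases hxy : x = y <;> by_cases hyz : y = z <;>
      simp_all <;> linarith
  eq_of_dist_eq_zero := by
    intro x y h
    by_cases hxy : x = y
    · exact hxy
    · simp only [if_neg hxy] at h; exact absurd h hl.ne'

section Glue

variable {K M : Type*} [MetricSpace K] [Fintype K] [Nonempty K]
  [MetricSpace M] [Fintype M] [Nonempty M]

/-- cross distance -/
noncomputable def rhoAux (g : K → M) (c : ℝ) (x : K) (p : M) : ℝ :=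
  Finset.univ.inf' Finset.univ_nonempty fun x' : K => dist x x' + c + dist (g x') p

lemma rhoAux_le (g : K → M) (c : ℝ) (x x' : K) (p : M) :
    rhoAux g c x p ≤ dist x x' + c + dist (g x') p :=
  Finset.inf'_le _ (Finset.mem_univ _)

lemma c_le_rhoAux (g : K → M) (c : ℝ) (x : K) (p : M) : c ≤ rhoAux g c x p :=
  Finset.le_inf' _ _ fun x' _ => by
    have h1 := dist_nonneg (x := x) (y := x')
    have h2 := dist_nonneg (x := g x') (y := p)
    linarith

lemma rhoAux_exists (g : K → M) (c : ℝ) (x : K) (p : M) :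
    ∃ x', rhoAux g c x p = dist x x' + c + dist (g x') p := by
  obtain ⟨x', -, h⟩ := Finset.exists_mem_eq_inf' (Finset.univ_nonempty)
    (fun x' : K => dist x x' + c + dist (g x') p)
  exact ⟨x', h⟩

lemma rhoAux_tri_left (g : K → M) (c : ℝ) (x y : K) (p : M) :
    rhoAux g c x p ≤ dist x y + rhoAux g c y p := by
  obtain ⟨x', h⟩ := rhoAux_exists g c y p
  have h1 := rhoAux_le g c x x' p
  have h2 := dist_triangle x y x'
  linarith

lemma rhoAux_tri_right (g : K → M) (c : ℝ) (x : K) (p q : M) :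
    rhoAux g c x q ≤ rhoAux g c x p + dist p q := by
  obtain ⟨x', h⟩ := rhoAux_exists g c x p
  have h1 := rhoAux_le g c x x' q
  have h2 := dist_triangle (g x') p q
  linarith

lemma rhoAux_mid (g : K → M) {lam c : ℝ} (hc : 0 < c)
    (hdist : ∀ x y : K, x ≠ y → dist x y = lam)
    (hub : ∀ a b : M, dist a b ≤ 2 * c + lam)
    (x : K) (p q : M) : dist p q ≤ rhoAux g c x p + rhoAux g c x q := by
  obtain ⟨x', h'⟩ := rhoAux_exists g c x p
  obtain ⟨x'', h''⟩ := rhoAux_exists g c x q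
  have key : dist (g x') (g x'') ≤ dist x x' + dist x x'' + 2 * c := by
    by_cases hxx : x' = x''
    · subst hxx
      simp only [dist_self]
      have h1 := dist_nonneg (x := x) (y := x')
      linarith
    · have hlam : lam ≤ dist x x' + dist x x'' := by
        by_cases hx1 : x = x'
        · subst hx1
          rw [hdist _ _ hxx]
          linarith [dist_nonneg (x := x) (y := x)]
        · rw [hdist _ _ hx1]
          linarith [dist_nonneg (x := x) (y := x'')]
      have := hub (g x') (g x'')
      linarith
  have t := dist_triangle4 p (g x') (g x'') q
  have hcomm : dist p (g x') = dist (g x') p := dist_comm _ _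
  linarith

/-- the glued distance on `K ⊕ M` -/
noncomputable def glueDistAux (g : K → M) (c : ℝ) : K ⊕ M → K ⊕ M → ℝ
  | .inl x, .inl y => dist x y
  | .inl x, .inr p => rhoAux g c x p
  | .inr p, .inl x => rhoAux g c x p
  | .inr p, .inr q => dist p q

/-- the glued metric space -/
noncomputable def glueMetricAux (g : K → M) {lam c : ℝ} (hl : 0 < lam) (hc : 0 < c)
    (hlc : lam ≤ 2 * c)
    (hdist : ∀ x y : K, x ≠ y → dist x y = lam)
    (hub : ∀ a b : M, dist a b ≤ 2 * c + lam) : MetricSpace (K ⊕ M) where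
  dist := glueDistAux g c
  dist_self z := by cases z <;> simp [glueDistAux]
  dist_comm z w := by cases z <;> cases w <;> simp [glueDistAux, dist_comm]
  dist_triangle z w v := by
    rcases z with x | p <;> rcases w with y | q <;> rcases v with u | r
    · exact dist_triangle x y u
    · exact rhoAux_tri_left g c x y r
    · -- dist x u ≤ rho x q + rho u q
      show dist x u ≤ rhoAux g c x q + rhoAux g c u q
      have h1 := c_le_rhoAux g c x q
      have h2 := c_le_rhoAux g c u q
      have h3 : dist x u ≤ lam := by
        by_cases h : x = u
        · subst h; simp; linarith
        · rw [hdist _ _ h]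
      linarith
    · exact rhoAux_tri_right g c x q r
    · show rhoAux g c u p ≤ rhoAux g c y p + dist y u
      have := rhoAux_tri_left g c u y p
      rw [dist_comm]
      linarith
    · exact rhoAux_mid g hc hdist hub y p r
    · show rhoAux g c u p ≤ dist p q + rhoAux g c u q
      have := rhoAux_tri_right g c u q p
      rw [dist_comm]
      linarith
    · exact dist_triangle p q r
  eq_of_dist_eq_zero := by
    intro z w h
    rcases z with x | p <;> rcases w with y | q
    · exact congrArg Sum.inl (eq_of_dist_eq_zero h)
    · exfalso
      have hle := c_le_rhoAux g c x q
      have h0 : rhoAux g c x q = 0 := h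
      linarith
    · exfalso
      have hle := c_le_rhoAux g c y p
      have h0 : rhoAux g c y p = 0 := h
      linarith
    · exact congrArg Sum.inr (eq_of_dist_eq_zero h)

end Glue

open Metric GromovHausdorff Set in
lemma ghDist_simplex_key {K M : Type*} [MetricSpace K] [Fintype K] [Nonempty K]
    [MetricSpace M] [Fintype M] [Nonempty M] {lam : ℝ} (hl : 0 < lam)
    (hdist : ∀ x y : K, x ≠ y → dist x y = lam)
    (hcard : Fintype.card M < Fintype.card K) :
    2 * GromovHausdorff.ghDist K M = max lam (Metric.diam (Set.univ : Set M) - lam) := by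
  set D := Metric.diam (Set.univ : Set M) with hD
  set c : ℝ := max lam (D - lam) / 2 with hc_def
  have hmax : lam ≤ max lam (D - lam) := le_max_left _ _
  have hc : 0 < c := by rw [hc_def]; linarith
  have hlc : lam ≤ 2 * c := by rw [hc_def]; linarith
  have hbdd : Bornology.IsBounded (Set.univ : Set M) := Set.finite_univ.isBounded
  have hub : ∀ a b : M, dist a b ≤ 2 * c + lam := by
    intro a b
    have h1 : dist a b ≤ D := Metric.dist_le_diam_of_mem hbdd (Set.mem_univ a) (Set.mem_univ b)
    have h2 : D - lam ≤ max lam (D - lam) := le_max_right _ _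
    rw [hc_def]; linarith
  -- upper bound
  obtain ⟨f⟩ : Nonempty (M ↪ K) := Function.Embedding.nonempty_of_card_le hcard.le
  set g : K → M := fun x => if h : ∃ p, f p = x then h.choose else Classical.arbitrary M with hg
  have hgf : ∀ p : M, g (f p) = p := by
    intro p
    have hex : ∃ q, f q = f p := ⟨p, rfl⟩
    simp only [hg, dif_pos hex]
    exact f.injective hex.choose_spec
  have upper : 2 * GromovHausdorff.ghDist K M ≤ max lam (D - lam) := by
    letI I : MetricSpace (K ⊕ M) := glueMetricAux g hl hc hlc hdist hub
    have hisoL : Isometry (Sum.inl : K → K ⊕ M) := Isometry.of_dist_eq fun a b => rfl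
    have hisoR : Isometry (Sum.inr : M → K ⊕ M) := Isometry.of_dist_eq fun a b => rfl
    have hle := GromovHausdorff.ghDist_le_hausdorffDist hisoL hisoR
    have hH : hausdorffDist (Set.range (Sum.inl : K → K ⊕ M))
        (Set.range (Sum.inr : M → K ⊕ M)) ≤ c := by
      apply hausdorffDist_le_of_mem_dist hc.le
      · rintro z ⟨x, rfl⟩
        refine ⟨Sum.inr (g x), Set.mem_range_self _, ?_⟩
        have h1 : dist (Sum.inl x : K ⊕ M) (Sum.inr (g x)) = rhoAux g c x (g x) := rfl
        have h2 := rhoAux_le g c x x (g x)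
        simp only [dist_self] at h2
        rw [h1]; linarith
      · rintro z ⟨p, rfl⟩
        refine ⟨Sum.inl (f p), Set.mem_range_self _, ?_⟩
        have h1 : dist (Sum.inr p : K ⊕ M) (Sum.inl (f p)) = rhoAux g c (f p) p := rfl
        have h2 := rhoAux_le g c (f p) (f p) p
        rw [hgf p, dist_self, dist_self] at h2
        rw [h1]; linarith
    have : GromovHausdorff.ghDist K M ≤ c := hle.trans hH
    rw [hc_def] at this; linarith
  -- lower bound
  obtain ⟨Φ, Ψ, hΦ, hΨ, hEq⟩ := GromovHausdorff.ghDist_eq_hausdorffDist K M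
  set H := hausdorffDist (Set.range Φ) (Set.range Ψ) with hH_def
  have hfin : EMetric.hausdorffEdist (Set.range Φ) (Set.range Ψ) ≠ ⊤ :=
    hausdorffEdist_ne_top_of_nonempty_of_bounded (Set.range_nonempty _) (Set.range_nonempty _)
      (Set.finite_range _).isBounded (Set.finite_range _).isBounded
  have claim1 : ∀ ε : ℝ, 0 < ε → lam ≤ 2 * H + ε := by
    intro ε hε
    have hlt : H < H + ε / 2 := by linarith
    have hfun : ∀ x : K, ∃ p : M, dist (Φ x) (Ψ p) < H + ε / 2 := by
      intro x
      obtain ⟨y, ⟨p, rfl⟩, hxy⟩ :=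
        exists_dist_lt_of_hausdorffDist_lt (Set.mem_range_self x) hlt hfin
      exact ⟨p, hxy⟩
    choose pf hpf using hfun
    obtain ⟨x, x', hne, hpp⟩ := Fintype.exists_ne_map_eq_of_card_lt pf hcard
    have h1 : dist (Φ x) (Φ x') ≤ dist (Φ x) (Ψ (pf x)) + dist (Ψ (pf x)) (Φ x') :=
      dist_triangle _ _ _
    have h2 : dist (Φ x) (Φ x') = lam := by rw [hΦ.dist_eq]; exact hdist _ _ hne
    have h3 : dist (Ψ (pf x)) (Φ x') = dist (Φ x') (Ψ (pf x')) := by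
      rw [dist_comm, hpp]
    have h4 := hpf x
    have h5 := hpf x'
    rw [h3] at h1
    linarith
  have claim2 : ∀ ε : ℝ, 0 < ε → D ≤ 2 * H + lam + ε := by
    intro ε hε
    have hlt : H < H + ε / 2 := by linarith
    have hHnn : 0 ≤ H := hausdorffDist_nonneg
    apply Metric.diam_le_of_forall_dist_le (by linarith)
    intro p _ q _
    obtain ⟨y, ⟨a, rfl⟩, hya⟩ :=
      exists_dist_lt_of_hausdorffDist_lt' (Set.mem_range_self p) hlt hfin
    obtain ⟨y, ⟨b, rfl⟩, hyb⟩ :=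
      exists_dist_lt_of_hausdorffDist_lt' (Set.mem_range_self q) hlt hfin
    have h1 : dist p q = dist (Ψ p) (Ψ q) := (hΨ.dist_eq _ _).symm
    have h2 := dist_triangle4 (Ψ p) (Φ a) (Φ b) (Ψ q)
    have h3 : dist (Φ a) (Φ b) ≤ lam := by
      rw [hΦ.dist_eq]
      by_cases hab : a = b
      · subst hab; simp [hl.le]
      · exact (hdist _ _ hab).le
    have h4 : dist (Ψ p) (Φ a) = dist (Φ a) (Ψ p) := dist_comm _ _
    have h5 : dist (Φ b) (Ψ q) < H + ε / 2 := hyb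
    rw [h4] at h2
    linarith
  have low1 : lam ≤ 2 * H := by
    by_contra hcon
    push_neg at hcon
    have := claim1 ((lam - 2 * H) / 2) (by linarith)
    linarith
  have low2 : D - lam ≤ 2 * H := by
    by_contra hcon
    push_neg at hcon
    have := claim2 ((D - lam - 2 * H) / 2) (by linarith)
    linarith
  have lower : max lam (D - lam) ≤ 2 * GromovHausdorff.ghDist K M := by
    rw [hEq]; exact max_le low1 low2
  linarith [le_antisymm upper lower, upper, lower]

theorem stmt_8 {M : Type*} [MetricSpace M] [Fintype M] [Nonempty M]
    {m : ℕ} (hm : Fintype.card M < m) {lam : ℝ} (hl : 0 < lam) :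
    2 * (letI := simplexMetric m lam hl
         haveI : Nonempty (Fin m) :=
           Fin.pos_iff_nonempty.mp (lt_of_le_of_lt (Nat.zero_le _) hm)
         GromovHausdorff.ghDist (Fin m) M) =
      max lam (Metric.diam (Set.univ : Set M) - lam) := by
  letI := simplexMetric m lam hl
  haveI : Nonempty (Fin m) := Fin.pos_iff_nonempty.mp (lt_of_le_of_lt (Nat.zero_le _) hm)
  refine ghDist_simplex_key hl ?_ ?_
  · intro x y h
    show (if x = y then 0 else lam) = lam
    rw [if_neg h]
  · simpa using hm
end

section
/- Let M be a finite metric space with n points, λ > 0, and let ε(M) = min of nonzero distances in M. Then 2·d_GH(λΔₙ, M) = max(λ - ε(M), diam M - λ). -/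
open scoped Classical

theorem simplex_gh_aux {X M : Type*} [MetricSpace X] [MetricSpace M]
    [Finite X] [Fintype M] [Nonempty X] [Nonempty M]
    (e : X ≃ M) {lam : ℝ} (hl : 0 < lam)
    (hd : ∀ x y : X, dist x y = if x = y then 0 else lam)
    (hn : 2 ≤ Fintype.card M)
    (eps : ℝ) (heps : eps = sInf {r : ℝ | ∃ x y : M, x ≠ y ∧ r = dist x y}) :
    2 * GromovHausdorff.ghDist X M =
      max (lam - eps) (Metric.diam (Set.univ : Set M) - lam) := by
  classical
  have hdle : ∀ x y : X, dist x y ≤ lam := by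
    intro x y; rw [hd]; split_ifs
    · exact hl.le
    · exact le_rfl
  -- facts about eps
  set S : Set ℝ := {r : ℝ | ∃ x y : M, x ≠ y ∧ r = dist x y} with hS
  have hSfin : S.Finite := by
    have : S ⊆ (fun p : M × M => dist p.1 p.2) '' Set.univ := by
      rintro r ⟨x, y, _, rfl⟩
      exact ⟨(x, y), Set.mem_univ _, rfl⟩
    exact (Set.finite_univ.image _).subset this
  have hSne : S.Nonempty := by
    obtain ⟨a, b, hab⟩ := Fintype.exists_pair_of_one_lt_card (α := M) (by omega)
    exact ⟨dist a b, a, b, hab, rfl⟩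
  have hepsS : eps ∈ S := by
    rw [heps]; exact hSne.csInf_mem hSfin
  have heps_le : ∀ x y : M, x ≠ y → eps ≤ dist x y := by
    intro x y hxy
    rw [heps]
    exact csInf_le hSfin.bddBelow ⟨x, y, hxy, rfl⟩
  have heps0 : 0 ≤ eps := by
    obtain ⟨x, y, _, h⟩ := hepsS
    rw [h]; exact dist_nonneg
  have hbdd : Bornology.IsBounded (Set.univ : Set M) := Set.finite_univ.isBounded
  have hdist_le_diam : ∀ x y : M, dist x y ≤ Metric.diam (Set.univ : Set M) := fun x y =>
    Metric.dist_le_diam_of_mem hbdd (Set.mem_univ x) (Set.mem_univ y)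
  have heps_diam : eps ≤ Metric.diam (Set.univ : Set M) := by
    obtain ⟨x, y, _, h⟩ := hepsS
    rw [h]; exact hdist_le_diam x y
  set D := max (lam - eps) (Metric.diam (Set.univ : Set M) - lam) with hD
  have hmax1 := le_max_left (lam - eps) (Metric.diam (Set.univ : Set M) - lam)
  have hmax2 := le_max_right (lam - eps) (Metric.diam (Set.univ : Set M) - lam)
  rw [← hD] at hmax1 hmax2
  have hD0 : 0 ≤ D := by linarith
  -- upper bound
  have hub : GromovHausdorff.ghDist X M ≤ 0 + D / 2 + 0 := by
    apply GromovHausdorff.ghDist_le_of_approx_subsets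
      (s := (Set.univ : Set X)) (fun x => e x.1)
    · intro x; exact ⟨x, Set.mem_univ x, by simp⟩
    · intro u
      refine ⟨⟨e.symm u, Set.mem_univ _⟩, ?_⟩
      simp
    · intro x y
      have hsub : dist x y = dist x.1 y.1 := Subtype.dist_eq x y
      by_cases hxy : x.1 = y.1
      · rw [hsub, hxy]
        simp [hD0]
      · rw [hsub, hd, if_neg hxy]
        have hexy : e x.1 ≠ e y.1 := fun h => hxy (e.injective h)
        have h1 := heps_le _ _ hexy
        have h2 := hdist_le_diam (e x.1) (e y.1)
        rw [abs_sub_le_iff]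
        constructor <;> linarith
  -- lower bound: for any r above ghDist, D ≤ 2r
  have key : ∀ r : ℝ, GromovHausdorff.ghDist X M < r → D ≤ 2 * r := by
    intro r hr
    set φ := GromovHausdorff.optimalGHInjl X M with hφ
    set ψ := GromovHausdorff.optimalGHInjr X M with hψ
    have isol : Isometry φ := GromovHausdorff.isometry_optimalGHInjl X M
    have isor : Isometry ψ := GromovHausdorff.isometry_optimalGHInjr X M
    have hH : Metric.hausdorffDist (Set.range φ) (Set.range ψ) =
        GromovHausdorff.ghDist X M := GromovHausdorff.hausdorffDist_optimal
    have hfin : EMetric.hausdorffEdist (Set.range φ) (Set.range ψ) ≠ ⊤ :=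
      Metric.hausdorffEdist_ne_top_of_nonempty_of_bounded (Set.range_nonempty _)
        (Set.range_nonempty _) (isCompact_range isol.continuous).isBounded
        (isCompact_range isor.continuous).isBounded
    have hrlt : Metric.hausdorffDist (Set.range φ) (Set.range ψ) < r := by rw [hH]; exact hr
    have hr0 : 0 ≤ r := le_of_lt (lt_of_le_of_lt Metric.hausdorffDist_nonneg hrlt)
    -- choose related points
    have hF : ∀ x : X, ∃ u : M, dist (φ x) (ψ u) < r := by
      intro x
      obtain ⟨z, hz, hlt⟩ := Metric.exists_dist_lt_of_hausdorffDist_lt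
        (Set.mem_range_self x) hrlt hfin
      obtain ⟨u, rfl⟩ := hz
      exact ⟨u, hlt⟩
    have hG : ∀ u : M, ∃ x : X, dist (φ x) (ψ u) < r := by
      intro u
      obtain ⟨z, hz, hlt⟩ := Metric.exists_dist_lt_of_hausdorffDist_lt'
        (Set.mem_range_self u) hrlt hfin
      obtain ⟨x, rfl⟩ := hz
      exact ⟨x, hlt⟩
    choose F hFs using hF
    choose G hGs using hG
    -- distortion bound
    have dis : ∀ (a b : X) (u v : M), dist (φ a) (ψ u) < r → dist (φ b) (ψ v) < r →
        |dist a b - dist u v| ≤ 2 * r := by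
      intro a b u v h1 h2
      have ea : dist a b = dist (φ a) (φ b) := (isol.dist_eq a b).symm
      have eu : dist u v = dist (ψ u) (ψ v) := (isor.dist_eq u v).symm
      have t1 : dist (φ a) (φ b) ≤ dist (φ a) (ψ u) + dist (ψ u) (ψ v) + dist (ψ v) (φ b) :=
        dist_triangle4 _ _ _ _
      have t2 : dist (ψ u) (ψ v) ≤ dist (ψ u) (φ a) + dist (φ a) (φ b) + dist (φ b) (ψ v) :=
        dist_triangle4 _ _ _ _
      have c1 : dist (ψ v) (φ b) = dist (φ b) (ψ v) := dist_comm _ _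
      have c2 : dist (ψ u) (φ a) = dist (φ a) (ψ u) := dist_comm _ _
      rw [abs_sub_le_iff]
      constructor <;> linarith
    -- diam bound
    have hdiam : Metric.diam (Set.univ : Set M) ≤ lam + 2 * r := by
      apply Metric.diam_le_of_forall_dist_le (by linarith)
      intro u _ v _
      have h := dis (G u) (G v) u v (hGs u) (hGs v)
      have h2 := (abs_sub_le_iff.mp h).2
      have h3 := hdle (G u) (G v)
      linarith
    -- lam - eps bound
    have hlameps : lam - eps ≤ 2 * r := by
      by_cases hGi : Function.Injective G
      · obtain ⟨u, v, huv, hev⟩ := hepsS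
        have hxy : G u ≠ G v := fun h => huv (hGi h)
        have h := dis (G u) (G v) u v (hGs u) (hGs v)
        have h1 := (abs_sub_le_iff.mp h).1
        rw [hd, if_neg hxy] at h1
        linarith [hev ▸ h1]
      · have hGs' : ¬ Function.Surjective G := fun hs =>
          hGi ((Finite.injective_iff_surjective_of_equiv e.symm).mpr hs)
        obtain ⟨x₀, hx₀'⟩ := not_forall.mp hGs'
        have hx₀ : ∀ u : M, G u ≠ x₀ := fun u h => hx₀' ⟨u, h⟩
        set u₀ := F x₀ with hu₀
        have h1 : dist (φ x₀) (ψ u₀) < r := hFs x₀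
        have h2 : dist (φ (G u₀)) (ψ u₀) < r := hGs u₀
        have hneq : x₀ ≠ G u₀ := fun h => hx₀ u₀ h.symm
        have h := dis x₀ (G u₀) u₀ u₀ h1 h2
        rw [dist_self, hd, if_neg hneq, sub_zero, abs_of_nonneg hl.le] at h
        linarith
    exact max_le (by linarith) (by linarith)
  have hlb : D ≤ 2 * GromovHausdorff.ghDist X M := by
    by_contra hc
    push_neg at hc
    have h1 : GromovHausdorff.ghDist X M <
        (GromovHausdorff.ghDist X M + D / 2) / 2 := by linarith
    have h2 := key _ h1
    linarith
  exact le_antisymm (by linarith) hlb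

theorem stmt_9 {M : Type*} [MetricSpace M] [Fintype M] [Nonempty M]
    (hn : 2 ≤ Fintype.card M) {lam : ℝ} (hl : 0 < lam)
    (eps : ℝ) (heps : eps = sInf {r : ℝ | ∃ x y : M, x ≠ y ∧ r = dist x y}) :
    2 * (letI := simplexMetric (Fintype.card M) lam hl
         haveI : Nonempty (Fin (Fintype.card M)) :=
           Fin.pos_iff_nonempty.mp (by omega)
         GromovHausdorff.ghDist (Fin (Fintype.card M)) M) =
      max (lam - eps) (Metric.diam (Set.univ : Set M) - lam) := by
  letI I := simplexMetric (Fintype.card M) lam hl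
  haveI hne : Nonempty (Fin (Fintype.card M)) := Fin.pos_iff_nonempty.mp (by omega)
  show 2 * GromovHausdorff.ghDist (Fin (Fintype.card M)) M =
      max (lam - eps) (Metric.diam (Set.univ : Set M) - lam)
  have base : ∀ x y : Fin (Fintype.card M),
      dist x y = @ite _ (x = y) (instDecidableEqFin _ x y) (0 : ℝ) lam := fun x y => rfl
  refine simplex_gh_aux (Fintype.equivFin M).symm hl ?_ hn eps heps
  intro x y
  rw [base]
  by_cases h : x = y <;> simp [h]
end

section
/- Let M be a finite metric space, m ≤ #M an integer, and λ > 0. Then 2·d_GH(λΔₘ, M) = min over all partitions D of M into m nonempty parts of max(diam D, λ - α(D), β(D) - λ), where diam D is the maximum diameter of a part, α(D) is the minimum over pairs of distinct parts of the infimum distance between them, and β(D) is the maximum over pairs of distinct parts of the supremum distance between them. -/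
open scoped Classical

/-! Put `d = d_GH(λΔₘ, M)`. A partition `D` of `M` into `m` parts is the same as a surjection
`p : M → Fin m` onto the simplex, and the three quantities `diam D`, `λ - α(D)`, `β(D) - λ`
bound the distortion of `p` on pairs in one part and on pairs in distinct parts; so the
right-hand side is the least distortion of a surjection `M → λΔₘ`, which is at least `2d`.
Conversely, an optimal embedding of both spaces into `ℓ^∞` yields a map `f : M → Fin m` of
distortion at most `2d`. If `f` misses a vertex `i`, then `i` lies within `d` of some `x ∈ M`,
which lies within `d` of the vertex `f x ≠ i`, so `λ ≤ 2d`; then every map whose fibres refine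
those of `f` still has distortion at most `2d`, and since `m ≤ #M` one of them is surjective. -/

open Metric Set GromovHausdorff

section Refinement

variable {α β : Type*} [Fintype α] [Fintype β] [DecidableEq β]

lemma exists_refinement_card_image_lt {g : α → β} (hg : ¬ Function.Surjective g)
    (hcard : Fintype.card β ≤ Fintype.card α) :
    ∃ g' : α → β, (∀ x y, g' x = g' y → g x = g y) ∧
      (Finset.univ.image g).card < (Finset.univ.image g').card := by
  obtain ⟨i₀, hi₀⟩ : ∃ i₀, ∀ x, g x ≠ i₀ := by simpa [Function.Surjective] using hg
  have hi₀' : i₀ ∉ Finset.univ.image g := by simpa using hi₀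
  have hlt : (Finset.univ.image g).card < (Finset.univ : Finset α).card :=
    (Finset.card_lt_univ_of_notMem hi₀').trans_le hcard
  obtain ⟨x₁, -, x₂, -, hne, heq⟩ := Finset.exists_ne_map_eq_of_card_lt_of_maps_to hlt
    (fun x _ => Finset.mem_image_of_mem g (Finset.mem_univ x))
  -- `x₁` shares its value with `x₂`, so it can be moved to the missed value `i₀`.
  refine ⟨Function.update g x₁ i₀, fun x y h => ?_, Finset.card_lt_card ?_⟩
  · by_cases hx : x = x₁ <;> by_cases hy : y = x₁
    · rw [hx, hy]
    · simp [hx, hy] at h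
      exact absurd h.symm (hi₀ y)
    · simp [hx, hy] at h
      exact absurd h (hi₀ x)
    · simpa [hx, hy] using h
  · refine (Finset.ssubset_iff_of_subset fun i hi => ?_).mpr ⟨i₀, ?_, hi₀'⟩
    · obtain ⟨y, -, rfl⟩ := Finset.mem_image.mp hi
      by_cases hy : y = x₁
      · subst hy
        exact Finset.mem_image.mpr ⟨x₂, Finset.mem_univ _, by simp [hne.symm, heq]⟩
      · exact Finset.mem_image.mpr ⟨y, Finset.mem_univ _, by simp [hy]⟩
    · exact Finset.mem_image.mpr ⟨x₁, Finset.mem_univ _, by simp⟩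

lemma exists_surjective_refinement (hcard : Fintype.card β ≤ Fintype.card α) (f : α → β) :
    ∃ g : α → β, Function.Surjective g ∧ ∀ x y, g x = g y → f x = f y := by
  have : Nonempty {g : α → β // ∀ x y, g x = g y → f x = f y} := ⟨⟨f, fun _ _ => id⟩⟩
  obtain ⟨⟨g, hgf⟩, hmax⟩ := Finite.exists_max
    fun g : {g : α → β // ∀ x y, g x = g y → f x = f y} => (Finset.univ.image g.1).card
  refine ⟨g, by_contra fun hg => ?_, hgf⟩
  obtain ⟨g', hg'g, hlt⟩ := exists_refinement_card_image_lt hg hcard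
  exact (hmax ⟨g', fun x y h => hgf x y (hg'g x y h)⟩).not_gt hlt

end Refinement

section GromovHausdorff

lemma abs_dist_sub_dist_le_of_isometry {X Y Z : Type*} [PseudoMetricSpace X]
    [PseudoMetricSpace Y] [PseudoMetricSpace Z] {Φ : X → Z} {Ψ : Y → Z} (hΦ : Isometry Φ)
    (hΨ : Isometry Ψ) {f : Y → X} {d : ℝ} (hf : ∀ y, dist (Φ (f y)) (Ψ y) ≤ d) (y y' : Y) :
    |dist (f y) (f y') - dist y y'| ≤ 2 * d := by
  have := dist_dist_dist_le (Φ (f y)) (Φ (f y')) (Ψ y) (Ψ y')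
  rw [hΦ.dist_eq, hΨ.dist_eq, Real.dist_eq] at this
  linarith [hf y, hf y']

lemma exists_dist_le_hausdorffDist_of_isCompact {Z : Type*} [PseudoMetricSpace Z] {s t : Set Z}
    {x : Z} (hx : x ∈ s) (ht : IsCompact t) (ht₀ : t.Nonempty)
    (hst : hausdorffEDist s t ≠ ⊤) : ∃ y ∈ t, dist x y ≤ hausdorffDist s t := by
  obtain ⟨y, hy, hxy⟩ := ht.exists_infDist_eq_dist ht₀ x
  exact ⟨y, hy, hxy ▸ infDist_le_hausdorffDist_of_mem hx hst⟩

variable {X Y : Type*} [MetricSpace X] [CompactSpace X] [Nonempty X]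
  [MetricSpace Y] [CompactSpace Y] [Nonempty Y]

lemma exists_isometry_dist_le_ghDist :
    ∃ (Φ : X → lp (fun _ : ℕ => ℝ) ⊤) (Ψ : Y → lp (fun _ : ℕ => ℝ) ⊤), Isometry Φ ∧ Isometry Ψ ∧
      (∀ x, ∃ y, dist (Φ x) (Ψ y) ≤ ghDist X Y) ∧ ∀ y, ∃ x, dist (Φ x) (Ψ y) ≤ ghDist X Y := by
  obtain ⟨Φ, Ψ, hΦ, hΨ, hgh⟩ := ghDist_eq_hausdorffDist X Y
  have hΦc := isCompact_range hΦ.continuous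
  have hΨc := isCompact_range hΨ.continuous
  have hfin : hausdorffEDist (range Φ) (range Ψ) ≠ ⊤ :=
    hausdorffEDist_ne_top_of_nonempty_of_bounded (range_nonempty _) (range_nonempty _)
      hΦc.isBounded hΨc.isBounded
  refine ⟨Φ, Ψ, hΦ, hΨ, fun x => ?_, fun y => ?_⟩
  · obtain ⟨_, ⟨y, rfl⟩, h⟩ := exists_dist_le_hausdorffDist_of_isCompact (mem_range_self x)
      hΨc (range_nonempty _) hfin
    exact ⟨y, hgh ▸ h⟩
  · obtain ⟨_, ⟨x, rfl⟩, h⟩ := exists_dist_le_hausdorffDist_of_isCompact (mem_range_self y)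
      hΦc (range_nonempty _) (by rwa [hausdorffEDist_comm])
    exact ⟨x, by rwa [dist_comm, hgh, hausdorffDist_comm]⟩

lemma ghDist_le_of_surjective {p : X → Y} (hp : Function.Surjective p) {c : ℝ}
    (hc : ∀ x x', |dist (p x) (p x') - dist x x'| ≤ c) : ghDist X Y ≤ c / 2 := by
  simpa using ghDist_le_of_approx_subsets (s := univ) (fun x => p x) (ε₁ := 0) (ε₃ := 0)
    (fun x => ⟨x, mem_univ x, by simp⟩)
    (fun y => ⟨⟨(hp y).choose, mem_univ _⟩, by simp [(hp y).choose_spec]⟩)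
    (fun x x' => by rw [abs_sub_comm]; exact hc x x')

end GromovHausdorff

section Partition

variable {X : Type*} {m : ℕ}

lemma IsPartition.exists_eq_fibers {P : Fin m → Set X} (hP : IsPartition P) :
    ∃ p : X → Fin m, Function.Surjective p ∧ P = fun i => p ⁻¹' {i} := by
  obtain ⟨hne, hdisj, hcover⟩ := hP
  choose p hp using fun x => mem_iUnion.mp (hcover ▸ mem_univ x : x ∈ ⋃ i, P i)
  have hfib : ∀ i x, x ∈ P i ↔ p x = i := fun i x =>
    ⟨fun hx => by_contra fun h => (hdisj h).ne_of_mem (hp x) hx rfl, fun h => h ▸ hp x⟩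
  refine ⟨p, fun i => ?_, funext fun i => ext fun x => hfib i x⟩
  obtain ⟨x, hx⟩ := hne i
  exact ⟨x, (hfib i x).1 hx⟩

lemma isPartition_fibers {p : X → Fin m} (hp : Function.Surjective p) :
    IsPartition fun i => p ⁻¹' {i} :=
  ⟨hp, fun _ _ hij => disjoint_left.mpr fun _ hi hj => hij (hi.symm.trans hj),
    iUnion_eq_univ_iff.mpr fun x => ⟨p x, rfl⟩⟩

variable [MetricSpace X]

noncomputable def partitionDistortion (lam : ℝ) (P : Fin m → Set X) : ℝ :=
  max (diamD P) (max (lam - alphaD P) (betaD P - lam))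

lemma partitionDistortion_nonneg (lam : ℝ) (P : Fin m → Set X) : 0 ≤ partitionDistortion lam P :=
  (Real.iSup_nonneg fun _ => diam_nonneg).trans (le_max_left _ _)

variable {p : X → Fin m}

lemma dist_le_diamD_fibers [Finite X] {x y : X} (h : p x = p y) :
    dist x y ≤ diamD fun i => p ⁻¹' {i} :=
  (dist_le_diam_of_mem (s := p ⁻¹' {p x}) (toFinite _).isBounded rfl h.symm).trans
    (le_ciSup (f := fun i => diam (p ⁻¹' {i})) (finite_range _).bddAbove (p x))

lemma alphaD_fibers_le {x y : X} (h : p x ≠ p y) : alphaD (fun i => p ⁻¹' {i}) ≤ dist x y :=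
  csInf_le ⟨0, by rintro _ ⟨-, -, -, x, -, y, -, rfl⟩; exact dist_nonneg⟩
    ⟨p x, p y, h, x, rfl, y, rfl, rfl⟩

lemma dist_le_betaD_fibers [Finite X] {x y : X} (h : p x ≠ p y) :
    dist x y ≤ betaD fun i => p ⁻¹' {i} :=
  le_csSup ⟨diam (univ : Set X), by
      rintro _ ⟨-, -, -, x, -, y, -, rfl⟩
      exact dist_le_diam_of_mem (toFinite _).isBounded (mem_univ x) (mem_univ y)⟩
    ⟨p x, p y, h, x, rfl, y, rfl, rfl⟩

lemma diamD_fibers_le {c : ℝ} (hc : 0 ≤ c) (h : ∀ x y, p x = p y → dist x y ≤ c) :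
    diamD (fun i => p ⁻¹' {i}) ≤ c :=
  Real.iSup_le (fun _ => diam_le_of_forall_dist_le hc fun x hx y hy => h x y (hx.trans hy.symm))
    hc

lemma le_alphaD_fibers {a : ℝ} {x₀ y₀ : X} (h₀ : p x₀ ≠ p y₀)
    (h : ∀ x y, p x ≠ p y → a ≤ dist x y) : a ≤ alphaD fun i => p ⁻¹' {i} :=
  le_csInf ⟨_, p x₀, p y₀, h₀, x₀, rfl, y₀, rfl, rfl⟩ <| by
    rintro _ ⟨i, j, hij, x, rfl, y, rfl, rfl⟩
    exact h x y hij

lemma betaD_fibers_le {c : ℝ} (hc : 0 ≤ c) (h : ∀ x y, p x ≠ p y → dist x y ≤ c) :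
    betaD (fun i => p ⁻¹' {i}) ≤ c :=
  Real.sSup_le (by rintro _ ⟨i, j, hij, x, rfl, y, rfl, rfl⟩; exact h x y hij) hc

end Partition

section Simplex

variable {X : Type*} [MetricSpace X] {m : ℕ} [MetricSpace (Fin m)] {lam : ℝ}

lemma abs_dist_sub_dist_le_partitionDistortion [Finite X]
    (hS : ∀ i j : Fin m, i ≠ j → dist i j = lam) (p : X → Fin m) (x y : X) :
    |dist (p x) (p y) - dist x y| ≤ partitionDistortion lam fun i => p ⁻¹' {i} := by
  by_cases h : p x = p y
  · rw [h, dist_self, zero_sub, abs_neg, abs_of_nonneg dist_nonneg]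
    exact le_max_of_le_left (dist_le_diamD_fibers h)
  · rw [hS _ _ h, abs_sub_le_iff]
    exact ⟨le_max_of_le_right (le_max_of_le_left (sub_le_sub_left (alphaD_fibers_le h) lam)),
      le_max_of_le_right (le_max_of_le_right (sub_le_sub_right (dist_le_betaD_fibers h) lam))⟩

lemma partitionDistortion_fibers_le (hS : ∀ i j : Fin m, i ≠ j → dist i j = lam) (hm : 1 < m)
    {p : X → Fin m} (hp : Function.Surjective p) {c : ℝ}
    (hc : ∀ x y, |dist (p x) (p y) - dist x y| ≤ c) :
    partitionDistortion lam (fun i => p ⁻¹' {i}) ≤ c := by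
  obtain ⟨x₀, hx₀⟩ := hp ⟨0, by omega⟩
  obtain ⟨y₀, hy₀⟩ := hp ⟨1, hm⟩
  have h₀ : p x₀ ≠ p y₀ := by simp [hx₀, hy₀, Fin.ext_iff]
  have hlam : 0 ≤ lam := hS _ _ h₀ ▸ dist_nonneg
  have hc₀ : 0 ≤ c := (abs_nonneg _).trans (hc x₀ x₀)
  have hdiff : ∀ x y, p x ≠ p y → lam - dist x y ≤ c ∧ dist x y - lam ≤ c :=
    fun x y h => abs_sub_le_iff.1 (hS _ _ h ▸ hc x y)
  refine max_le (diamD_fibers_le hc₀ fun x y h => by simpa [h] using hc x y) (max_le ?_ ?_)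
  · linarith [le_alphaD_fibers (a := lam - c) h₀ fun x y h => by linarith [(hdiff x y h).1]]
  · linarith [betaD_fibers_le (c := lam + c) (by linarith) fun x y h => by
      linarith [(hdiff x y h).2]]

lemma abs_dist_sub_dist_le_of_refines (hS : ∀ i j : Fin m, i ≠ j → dist i j = lam)
    {f g : X → Fin m} {c : ℝ} (hlam : lam ≤ c) (hf : ∀ x y, |dist (f x) (f y) - dist x y| ≤ c)
    (hgf : ∀ x y, g x = g y → f x = f y) (x y : X) : |dist (g x) (g y) - dist x y| ≤ c := by
  by_cases hg : g x = g y
  · simpa [hg, hgf x y hg] using hf x y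
  by_cases hfxy : f x = f y
  · have hxy : dist x y ≤ c := by simpa [hfxy] using hf x y
    have hlam₀ : 0 ≤ lam := hS _ _ hg ▸ dist_nonneg
    rw [hS _ _ hg, abs_sub_le_iff]
    constructor <;> linarith [dist_nonneg (x := x) (y := y)]
  · rw [hS _ _ hg, ← hS _ _ hfxy]
    exact hf x y

variable {M : Type*} [MetricSpace M] [Fintype M] [Nonempty M] [Nonempty (Fin m)]

lemma two_mul_ghDist_le_partitionDistortion (hS : ∀ i j : Fin m, i ≠ j → dist i j = lam)
    {p : M → Fin m} (hp : Function.Surjective p) :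
    2 * ghDist (Fin m) M ≤ partitionDistortion lam fun i => p ⁻¹' {i} := by
  have := ghDist_le_of_surjective hp (abs_dist_sub_dist_le_partitionDistortion hS p)
  rw [show ghDist (Fin m) M = ghDist M (Fin m) from dist_comm _ _]
  linarith

lemma exists_surjective_abs_dist_sub_dist_le_two_mul_ghDist
    (hS : ∀ i j : Fin m, i ≠ j → dist i j = lam) (hmM : m ≤ Fintype.card M) :
    ∃ g : M → Fin m, Function.Surjective g ∧
      ∀ x y, |dist (g x) (g y) - dist x y| ≤ 2 * ghDist (Fin m) M := by
  obtain ⟨Φ, Ψ, hΦ, hΨ, hΦΨ, hΨΦ⟩ := exists_isometry_dist_le_ghDist (X := Fin m) (Y := M)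
  choose f hf using hΨΦ
  have hfd := abs_dist_sub_dist_le_of_isometry hΦ hΨ hf
  by_cases hfs : Function.Surjective f
  · exact ⟨f, hfs, hfd⟩
  have hlam : lam ≤ 2 * ghDist (Fin m) M := by
    obtain ⟨i, hi⟩ := not_forall.1 hfs
    obtain ⟨x, hx⟩ := hΦΨ i
    calc lam = dist (Φ i) (Φ (f x)) := by rw [hΦ.dist_eq, hS _ _ fun h => hi ⟨x, h.symm⟩]
      _ ≤ dist (Φ i) (Ψ x) + dist (Φ (f x)) (Ψ x) := dist_triangle_right _ _ _
      _ ≤ 2 * ghDist (Fin m) M := by linarith [hf x]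
  obtain ⟨g, hg, hgf⟩ := exists_surjective_refinement (by simpa using hmM) f
  exact ⟨g, hg, abs_dist_sub_dist_le_of_refines hS hlam hfd hgf⟩

end Simplex

theorem stmt_10 {M : Type*} [MetricSpace M] [Fintype M] [Nonempty M]
    {m : ℕ} (hm : 2 ≤ m) (hmM : m ≤ Fintype.card M) {lam : ℝ} (hl : 0 < lam) :
    2 * (letI := simplexMetric m lam hl
         haveI : Nonempty (Fin m) := Fin.pos_iff_nonempty.mp (by omega)
         GromovHausdorff.ghDist (Fin m) M) =
      sInf {r : ℝ | ∃ P : Fin m → Set M, IsPartition P ∧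
        r = max (diamD P) (max (lam - alphaD P) (betaD P - lam))} := by
  let _ : MetricSpace (Fin m) := simplexMetric m lam hl
  have : Nonempty (Fin m) := Fin.pos_iff_nonempty.mp (by omega)
  have hS : ∀ i j : Fin m, i ≠ j → dist i j = lam := fun _ _ h => if_neg h
  obtain ⟨g, hg, hgd⟩ := exists_surjective_abs_dist_sub_dist_le_two_mul_ghDist hS hmM
  have hmem : partitionDistortion lam (fun i => g ⁻¹' {i}) ∈
      {r : ℝ | ∃ P : Fin m → Set M, IsPartition P ∧ r = partitionDistortion lam P} :=
    ⟨_, isPartition_fibers hg, rfl⟩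
  refine le_antisymm (le_csInf ⟨_, hmem⟩ ?_) ?_
  · rintro _ ⟨P, hP, rfl⟩
    obtain ⟨p, hp, rfl⟩ := hP.exists_eq_fibers
    exact two_mul_ghDist_le_partitionDistortion hS hp
  · refine (csInf_le ⟨0, ?_⟩ hmem).trans (partitionDistortion_fibers_le hS hm hg hgd)
    rintro _ ⟨P, -, rfl⟩
    exact partitionDistortion_nonneg lam P
end

section
/- Let M be a finite metric space, k ≥ 1 with k+1 ≤ #M, and λ ≥ diam M + σₖ, where σₖ = max{α(D) : D a partition of M into k+1 nonempty parts}. Then 2·d_GH(λΔ_{k+1}, M) = λ - σₖ. -/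
open scoped Classical

section Aux

-- existence of a partition
lemma exists_isPartition {M : Type*} [Fintype M] {m : ℕ} (hm : 0 < m)
    (h : m ≤ Fintype.card M) : ∃ P : Fin m → Set M, IsPartition P := by
  have : Fintype.card (Fin m) ≤ Fintype.card M := by simpa using h
  obtain ⟨f⟩ := Function.Embedding.nonempty_of_card_le this
  refine ⟨fun i => if (i : ℕ) + 1 < m then {f i} else Set.univ \ (f '' {j | (j : ℕ) + 1 < m}),
    ?_, ?_, ?_⟩
  · intro i
    by_cases hi : (i : ℕ) + 1 < m
    · simp [hi]
    · refine ⟨f i, ?_⟩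
      simp only [if_neg hi, Set.mem_diff, Set.mem_univ, true_and]
      rintro ⟨j, hj, hji⟩
      exact hi (f.injective hji ▸ hj)
  · intro i j hij
    by_cases hi : (i : ℕ) + 1 < m <;> by_cases hj : (j : ℕ) + 1 < m
    · simp only [if_pos hi, if_pos hj, Set.disjoint_singleton]
      exact fun he => hij (f.injective he)
    · simp only [if_pos hi, if_neg hj]
      refine Set.disjoint_left.mpr ?_
      rintro x rfl ⟨_, hmem⟩
      exact hmem ⟨i, hi, rfl⟩
    · simp only [if_neg hi, if_pos hj]
      refine Set.disjoint_left.mpr ?_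
      rintro x ⟨_, hx⟩ rfl
      exact hx ⟨j, hj, rfl⟩
    · exfalso; apply hij; ext
      omega
  · ext x
    simp only [Set.mem_iUnion, Set.mem_univ, iff_true]
    by_cases hx : ∃ j : Fin m, (j : ℕ) + 1 < m ∧ f j = x
    · obtain ⟨j, hj, hjx⟩ := hx
      exact ⟨j, by simp only [if_pos hj]; exact hjx ▸ rfl⟩
    · refine ⟨⟨m - 1, by omega⟩, ?_⟩
      have hi : ¬ ((m - 1 : ℕ) + 1 < m) := by omega
      rw [if_neg (by simpa using hi)]
      refine ⟨Set.mem_univ x, ?_⟩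
      rintro ⟨j, hj, hjx⟩
      exact hx ⟨j, hj, hjx⟩

-- the set of cross distances is finite
lemma crossSet_finite {M : Type*} [MetricSpace M] [Fintype M] {m : ℕ} (P : Fin m → Set M) :
    {r : ℝ | ∃ i j, i ≠ j ∧ ∃ x ∈ P i, ∃ y ∈ P j, r = dist x y}.Finite := by
  apply Set.Finite.subset (Set.finite_range (fun p : M × M => dist p.1 p.2))
  rintro r ⟨i, j, hij, x, hx, y, hy, rfl⟩
  exact ⟨(x, y), rfl⟩

lemma crossSet_nonempty {M : Type*} [MetricSpace M] {m : ℕ} {P : Fin m → Set M}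
    (hP : IsPartition P) (hm : 2 ≤ m) :
    {r : ℝ | ∃ i j, i ≠ j ∧ ∃ x ∈ P i, ∃ y ∈ P j, r = dist x y}.Nonempty := by
  have h0 : (0 : ℕ) < m := by omega
  have h1 : (1 : ℕ) < m := by omega
  obtain ⟨x, hx⟩ := hP.1 ⟨0, h0⟩
  obtain ⟨y, hy⟩ := hP.1 ⟨1, h1⟩
  exact ⟨dist x y, ⟨0, h0⟩, ⟨1, h1⟩, by simp [Fin.ext_iff], x, hx, y, hy, rfl⟩

lemma alphaD_le {M : Type*} [MetricSpace M] [Fintype M] {m : ℕ} {P : Fin m → Set M}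
    {i j : Fin m} (hij : i ≠ j) {x y : M} (hx : x ∈ P i) (hy : y ∈ P j) :
    alphaD P ≤ dist x y :=
  csInf_le (crossSet_finite P).bddBelow ⟨i, j, hij, x, hx, y, hy, rfl⟩

lemma exists_alphaD_eq {M : Type*} [MetricSpace M] [Fintype M] {m : ℕ} {P : Fin m → Set M}
    (hP : IsPartition P) (hm : 2 ≤ m) :
    ∃ i j, i ≠ j ∧ ∃ x ∈ P i, ∃ y ∈ P j, alphaD P = dist x y :=
  (crossSet_nonempty hP hm).csInf_mem (crossSet_finite P)

-- the sigma set
lemma sigSet_finite {M : Type*} [MetricSpace M] [Fintype M] {m : ℕ} :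
    {r : ℝ | ∃ P : Fin m → Set M, IsPartition P ∧ r = alphaD P}.Finite := by
  have : {r : ℝ | ∃ P : Fin m → Set M, IsPartition P ∧ r = alphaD P}
      ⊆ Set.range (fun P : Fin m → Set M => alphaD P) := by
    rintro r ⟨P, _, rfl⟩; exact ⟨P, rfl⟩
  exact Set.Finite.subset (Set.finite_range _) this

lemma alphaD_le_sig {M : Type*} [MetricSpace M] [Fintype M] {m : ℕ} {P : Fin m → Set M}
    (hP : IsPartition P) :
    alphaD P ≤ sSup {r : ℝ | ∃ P : Fin m → Set M, IsPartition P ∧ r = alphaD P} :=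
  le_csSup (sigSet_finite).bddAbove ⟨P, hP, rfl⟩

lemma exists_sig_eq {M : Type*} [MetricSpace M] [Fintype M] {m : ℕ} (hm : 0 < m)
    (h : m ≤ Fintype.card M) :
    ∃ P : Fin m → Set M, IsPartition P ∧
      sSup {r : ℝ | ∃ P : Fin m → Set M, IsPartition P ∧ r = alphaD P} = alphaD P := by
  have hne : {r : ℝ | ∃ P : Fin m → Set M, IsPartition P ∧ r = alphaD P}.Nonempty := by
    obtain ⟨P, hP⟩ := exists_isPartition hm h
    exact ⟨alphaD P, P, hP, rfl⟩
  exact hne.csSup_mem sigSet_finite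

end Aux

theorem stmt_11 {M : Type*} [MetricSpace M] [Fintype M] [Nonempty M]
    {k : ℕ} (hk : 1 ≤ k) (hk1 : k + 1 ≤ Fintype.card M)
    (sig : ℝ)
    (hsig : sig = sSup {r : ℝ | ∃ P : Fin (k + 1) → Set M, IsPartition P ∧ r = alphaD P})
    {lam : ℝ} (hlam : Metric.diam (Set.univ : Set M) + sig ≤ lam) :
    2 * (letI := simplexMetric (k + 1) lam (by
          obtain ⟨x, y, hxy⟩ := Fintype.exists_pair_of_one_lt_card
            (show 1 < Fintype.card M by omega)
          have h1 : 0 < dist x y := dist_pos.mpr hxy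
          have h3 : dist x y ≤ Metric.diam (Set.univ : Set M) :=
            Metric.dist_le_diam_of_mem Set.finite_univ.isBounded
              (Set.mem_univ x) (Set.mem_univ y)
          have h4 : 0 ≤ sig := by
            rw [hsig]
            apply Real.sSup_nonneg
            rintro r ⟨P, hP, rfl⟩
            apply Real.sInf_nonneg
            rintro s ⟨i, j, hij, x', hx', y', hy', rfl⟩
            exact dist_nonneg
          linarith)
         haveI : Nonempty (Fin (k + 1)) := Fin.pos_iff_nonempty.mp (by omega)
         GromovHausdorff.ghDist (Fin (k + 1)) M) = lam - sig := by
  -- basic positivity facts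
  have hsig0 : 0 ≤ sig := by
    rw [hsig]
    apply Real.sSup_nonneg
    rintro r ⟨P, hP, rfl⟩
    apply Real.sInf_nonneg
    rintro s ⟨i, j, hij, x', hx', y', hy', rfl⟩
    exact dist_nonneg
  have hdiam0 : 0 ≤ Metric.diam (Set.univ : Set M) := Metric.diam_nonneg
  have hl : 0 < lam := by
    obtain ⟨x, y, hxy⟩ := Fintype.exists_pair_of_one_lt_card
      (show 1 < Fintype.card M by omega)
    have h1 : 0 < dist x y := dist_pos.mpr hxy
    have h3 : dist x y ≤ Metric.diam (Set.univ : Set M) :=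
      Metric.dist_le_diam_of_mem Set.finite_univ.isBounded (Set.mem_univ x) (Set.mem_univ y)
    linarith
  letI : MetricSpace (Fin (k + 1)) := simplexMetric (k + 1) lam hl
  haveI : Nonempty (Fin (k + 1)) := Fin.pos_iff_nonempty.mp (by omega)
  show 2 * GromovHausdorff.ghDist (Fin (k + 1)) M = lam - sig
  have dist_simplex : ∀ i j : Fin (k + 1), dist i j = if i = j then 0 else lam := fun _ _ => rfl
  have ghsymm : GromovHausdorff.ghDist (Fin (k + 1)) M
      = GromovHausdorff.ghDist M (Fin (k + 1)) := dist_comm _ _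
  -- Upper bound
  have hub : GromovHausdorff.ghDist M (Fin (k + 1)) ≤ 0 + (lam - sig) / 2 + 0 := by
    obtain ⟨P, hP, hPs⟩ := exists_sig_eq (M := M) (m := k + 1) (by omega) hk1
    rw [← hsig] at hPs
    -- index function
    have hidx : ∀ x : M, ∃ i, x ∈ P i := by
      intro x
      have := hP.2.2 ▸ Set.mem_univ x
      simpa [Set.mem_iUnion] using (hP.2.2.symm ▸ Set.mem_univ x : x ∈ ⋃ i, P i)
    choose idx hidxmem using hidx
    have idx_eq : ∀ {x : M} {i : Fin (k + 1)}, x ∈ P i → idx x = i := by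
      intro x i hxi
      by_contra hne
      exact (hP.2.1 hne).ne_of_mem (hidxmem x) hxi rfl
    apply GromovHausdorff.ghDist_le_of_approx_subsets
      (s := (Set.univ : Set M)) (fun x => idx x.1)
    · exact fun x => ⟨x, Set.mem_univ x, by simp⟩
    · intro i
      obtain ⟨x, hx⟩ := hP.1 i
      refine ⟨⟨x, Set.mem_univ x⟩, ?_⟩
      rw [idx_eq hx, dist_simplex, if_pos rfl]
    · intro x y
      have hd : dist x y = dist x.1 y.1 := rfl
      by_cases hxy : idx x.1 = idx y.1
      · rw [hd, dist_simplex, if_pos hxy]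
        have h1 : dist x.1 y.1 ≤ Metric.diam (Set.univ : Set M) :=
          Metric.dist_le_diam_of_mem Set.finite_univ.isBounded (Set.mem_univ _) (Set.mem_univ _)
        rw [sub_zero, abs_of_nonneg dist_nonneg]
        linarith
      · rw [hd, dist_simplex, if_neg hxy]
        have h1 : dist x.1 y.1 ≤ Metric.diam (Set.univ : Set M) :=
          Metric.dist_le_diam_of_mem Set.finite_univ.isBounded (Set.mem_univ _) (Set.mem_univ _)
        have h2 : sig ≤ dist x.1 y.1 := by
          rw [hPs]
          exact alphaD_le hxy (hidxmem x.1) (hidxmem y.1)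
        rw [abs_of_nonpos (by linarith)]
        linarith
  -- Lower bound
  have hlb : lam - sig ≤ 2 * GromovHausdorff.ghDist (Fin (k + 1)) M := by
    obtain ⟨Φ, Ψ, hΦ, hΨ, hgh⟩ :=
      GromovHausdorff.ghDist_eq_hausdorffDist (Fin (k + 1)) M
    set r := GromovHausdorff.ghDist (Fin (k + 1)) M with hr
    have hcΦ : IsCompact (Set.range Φ) := (Set.finite_range Φ).isCompact
    have hcΨ : IsCompact (Set.range Ψ) := (Set.finite_range Ψ).isCompact
    have hneΦ : (Set.range Φ).Nonempty := Set.range_nonempty _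
    have hneΨ : (Set.range Ψ).Nonempty := Set.range_nonempty _
    have hfin : EMetric.hausdorffEdist (Set.range Φ) (Set.range Ψ) ≠ ⊤ :=
      Metric.hausdorffEdist_ne_top_of_nonempty_of_bounded hneΦ hneΨ
        hcΦ.isBounded hcΨ.isBounded
    -- totality
    have htot1 : ∀ i : Fin (k + 1), ∃ x : M, dist (Φ i) (Ψ x) ≤ r := by
      intro i
      obtain ⟨y, hy, hyd⟩ := hcΨ.exists_infDist_eq_dist hneΨ (Φ i)
      obtain ⟨x, rfl⟩ := hy
      refine ⟨x, ?_⟩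
      rw [← hyd, hgh]
      exact Metric.infDist_le_hausdorffDist_of_mem (Set.mem_range_self i) hfin
    have htot2 : ∀ x : M, ∃ i : Fin (k + 1), dist (Φ i) (Ψ x) ≤ r := by
      intro x
      obtain ⟨y, hy, hyd⟩ := hcΦ.exists_infDist_eq_dist hneΦ (Ψ x)
      obtain ⟨i, rfl⟩ := hy
      refine ⟨i, ?_⟩
      rw [dist_comm, ← hyd, hgh]
      rw [Metric.hausdorffDist_comm]
      exact Metric.infDist_le_hausdorffDist_of_mem (Set.mem_range_self x) (by
        rwa [EMetric.hausdorffEdist_comm])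
    -- key distortion bound
    have key : ∀ (i j : Fin (k + 1)) (x y : M), dist (Φ i) (Ψ x) ≤ r →
        dist (Φ j) (Ψ y) ≤ r → |dist i j - dist x y| ≤ 2 * r := by
      intro i j x y hix hjy
      have h1 : dist i j = dist (Φ i) (Φ j) := (hΦ.dist_eq i j).symm
      have h2 : dist x y = dist (Ψ x) (Ψ y) := (hΨ.dist_eq x y).symm
      have t1 : dist (Φ i) (Φ j) ≤ dist (Φ i) (Ψ x) + dist (Ψ x) (Ψ y) + dist (Ψ y) (Φ j) :=
        dist_triangle4 _ _ _ _
      have t2 : dist (Ψ x) (Ψ y) ≤ dist (Ψ x) (Φ i) + dist (Φ i) (Φ j) + dist (Φ j) (Ψ y) :=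
        dist_triangle4 _ _ _ _
      rw [abs_le, h1, h2]
      rw [dist_comm (Ψ x) (Φ i)] at t2
      rw [dist_comm (Ψ y) (Φ j)] at t1
      constructor <;> linarith
    by_cases hcase : ∃ (x : M) (i j : Fin (k + 1)), i ≠ j ∧
        dist (Φ i) (Ψ x) ≤ r ∧ dist (Φ j) (Ψ x) ≤ r
    · obtain ⟨x, i, j, hij, h1, h2⟩ := hcase
      have := key i j x x h1 h2
      rw [dist_simplex, if_neg hij, dist_self, sub_zero, abs_of_pos hl] at this
      linarith
    · -- the fibers form a partition
      set P : Fin (k + 1) → Set M := fun i => {x | dist (Φ i) (Ψ x) ≤ r} with hPdef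
      have hP : IsPartition P := by
        refine ⟨fun i => htot1 i, ?_, ?_⟩
        · intro i j hij
          refine Set.disjoint_left.mpr fun x hxi hxj => ?_
          exact hcase ⟨x, i, j, hij, hxi, hxj⟩
        · ext x
          simp only [Set.mem_iUnion, Set.mem_univ, iff_true]
          exact htot2 x
      obtain ⟨i, j, hij, x, hx, y, hy, halpha⟩ := exists_alphaD_eq hP (by omega)
      have hle : alphaD P ≤ sig := hsig ▸ alphaD_le_sig hP
      have := key i j x y hx hy
      rw [dist_simplex, if_neg hij, ← halpha] at this
      have h2 : lam - alphaD P ≤ |lam - alphaD P| := le_abs_self _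
      linarith [abs_le.mp this]
  rw [ghsymm]
  have : GromovHausdorff.ghDist M (Fin (k + 1)) ≤ (lam - sig) / 2 := by linarith
  rw [ghsymm] at hlb
  linarith
end

section
/- Let M be a finite metric space with n points, G a minimum spanning tree on M with edges ordered by non-increasing length e₁,…,e_{n-1}, and let D' be any partition of M into k+1 nonempty parts (1 ≤ k ≤ n-1). Then α(D') ≤ |eₖ|, where α(D') is the minimum distance between distinct parts of D'. -/
/-!
Contracting the parts of a partition of `M` into `k + 1` classes turns the spanning tree into a
connected graph on `k + 1` vertices, so at least `k` tree edges join two different parts. Each of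
them is at least `α(D')` long, hence so are the `k` longest edges of the tree, in particular `eₖ`.
-/
open scoped Classical

/-- The length of a graph on a finite metric space: the sum of the distances between the
endpoints of its edges. -/
noncomputable def graphLength {M : Type*} [MetricSpace M] [Fintype M] (G : SimpleGraph M) : ℝ :=
  ∑ e ∈ G.edgeSet.toFinite.toFinset,
    Sym2.lift ⟨fun x y => dist x y, fun x y => dist_comm x y⟩ e

/-- The length of an edge: the distance between its endpoints. -/
noncomputable def edgeLen {M : Type*} [MetricSpace M] (e : Sym2 M) : ℝ :=
  Sym2.lift ⟨fun x y => dist x y, fun x y => dist_comm x y⟩ e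

/-- The length of the `i`-th edge in a list of edges (1-indexed), with the convention that the
`0`-th edge has length `0`. -/
noncomputable def edgeLenAt {M : Type*} [MetricSpace M] (E : List (Sym2 M)) : ℕ → ℝ
  | 0 => 0
  | i + 1 => (E.map edgeLen).getD i 0

namespace List

lemma Pairwise.le_getD_of_lt_countP {α : Type*} [LinearOrder α] {l : List α}
    (hl : l.Pairwise (· ≥ ·)) {a d : α} {k : ℕ} (hk : k < l.countP (a ≤ ·)) :
    a ≤ l.getD k d := by
  induction l generalizing k with
  | nil => simp at hk
  | cons b t ih =>
    rw [pairwise_cons] at hl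
    cases k with
    | zero =>
      obtain ⟨x, hx, hax⟩ := countP_pos_iff.mp (Nat.zero_lt_of_lt hk)
      rcases mem_cons.mp hx with rfl | hxt
      · simpa using hax
      · simpa using (of_decide_eq_true hax).trans (hl.1 x hxt)
    | succ k =>
      have hkt : k < t.countP (a ≤ ·) := by
        rw [countP_cons] at hk
        split_ifs at hk <;> omega
      simpa using ih hl.2 hkt

lemma card_le_countP {α : Type*} {l : List α} {p : α → Bool} {s : Finset α}
    (hs : ∀ x ∈ s, x ∈ l ∧ p x) : s.card ≤ l.countP p := by
  classical
  calc s.card ≤ (l.filter p).toFinset.card :=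
        Finset.card_le_card fun x hx => by simpa using hs x hx
    _ ≤ (l.filter p).length := toFinset_card_le _
    _ = l.countP p := (countP_eq_length_filter ..).symm

end List

namespace SimpleGraph

lemma Connected.exists_adj_dist_lt {V : Type*} {G : SimpleGraph V} (hG : G.Connected)
    {v r : V} (hv : v ≠ r) : ∃ u, G.Adj v u ∧ G.dist u r < G.dist v r := by
  obtain ⟨p, hp⟩ := hG.exists_walk_length_eq_dist v r
  cases p with
  | nil => exact absurd rfl hv
  | cons h q => exact ⟨_, h, by have := dist_le q; simp only [Walk.length_cons] at hp; omega⟩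

/-- Root `G` at `r`. In every class `i ≠ c r` of the colouring `c`, a vertex closest to `r` has a
neighbour closer to `r`, necessarily of another colour; these edges are distinct because each
one determines its class as the colour of its endpoint farther from `r`. -/
lemma Connected.exists_crossing_edges {V ι : Type*} [Fintype ι] {G : SimpleGraph V}
    (hG : G.Connected) {c : V → ι} (hc : Function.Surjective c) :
    ∃ s : Finset (Sym2 V), Fintype.card ι - 1 ≤ s.card ∧
      ∀ e ∈ s, ∃ x y, G.Adj x y ∧ c x ≠ c y ∧ e = s(x, y) := by
  obtain ⟨r⟩ := hG.nonempty
  set d : V → ℕ := fun x => G.dist x r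
  have hfiber (i : ι) : (c ⁻¹' {i}).Nonempty := hc i
  set v : ι → V := fun i => Function.argminOn d (c ⁻¹' {i}) (hfiber i)
  have hcv (i : ι) : c (v i) = i := Function.argminOn_mem d _ (hfiber i)
  have hparent (i : ι) : ∃ u, i ≠ c r → G.Adj (v i) u ∧ d u < d (v i) := by
    by_cases hi : i = c r
    · exact ⟨r, fun h => absurd hi h⟩
    · obtain ⟨u, hu⟩ := hG.exists_adj_dist_lt (fun h => hi ((hcv i).symm.trans (congrArg c h)))
      exact ⟨u, fun _ => hu⟩
  choose u hu using hparent
  have hcu {i : ι} (hi : i ≠ c r) : c (u i) ≠ i := fun h =>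
    (Function.argminOn_le d (c ⁻¹' {i}) (a := u i) h).not_gt (hu i hi).2
  refine ⟨(Finset.univ.erase (c r)).image fun i => s(v i, u i), ?_, ?_⟩
  · rw [Finset.card_image_of_injOn, Finset.card_erase_of_mem (Finset.mem_univ _),
      Finset.card_univ]
    intro i hi j hj hij
    have hi := (hu i (Finset.ne_of_mem_erase hi)).2
    have hj := (hu j (Finset.ne_of_mem_erase hj)).2
    rcases Sym2.eq_iff.mp hij with ⟨hv, -⟩ | ⟨hvu, huv⟩
    · rw [← hcv i, hv, hcv j]
    · simp only [hvu, ← huv] at hi hj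
      omega
  · simp only [Finset.mem_image, Finset.mem_erase, Finset.mem_univ, and_true]
    rintro _ ⟨i, hi, rfl⟩
    exact ⟨v i, u i, (hu i hi).1, by rw [hcv]; exact (hcu hi).symm, rfl⟩

end SimpleGraph

lemma IsPartition.exists_surjective_index {X : Type*} {m : ℕ} {P : Fin m → Set X}
    (hP : IsPartition P) : ∃ c : X → Fin m, Function.Surjective c ∧ ∀ x, x ∈ P (c x) := by
  obtain ⟨hne, hdisj, hcover⟩ := hP
  have hmem (x : X) : ∃ i, x ∈ P i := Set.mem_iUnion.mp (hcover ▸ Set.mem_univ x)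
  choose c hc using hmem
  refine ⟨c, fun i => ?_, hc⟩
  obtain ⟨x, hx⟩ := hne i
  by_contra! h
  exact Set.disjoint_left.mp (hdisj (h x)) (hc x) hx

lemma alphaD_le_dist {X : Type*} [MetricSpace X] {m : ℕ} (P : Fin m → Set X) {i j : Fin m}
    (hij : i ≠ j) {x y : X} (hx : x ∈ P i) (hy : y ∈ P j) : alphaD P ≤ dist x y :=
  csInf_le ⟨0, by rintro _ ⟨-, -, -, -, -, -, -, -, -, rfl⟩; exact dist_nonneg⟩
    ⟨i, j, hij, x, hx, y, hy, rfl⟩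

lemma edgeLenAt_eq_getD {M : Type*} [MetricSpace M] (E : List (Sym2 M)) {k : ℕ} (hk : 1 ≤ k) :
    edgeLenAt E k = (E.map edgeLen).getD (k - 1) 0 := by
  obtain ⟨k, rfl⟩ := Nat.exists_eq_add_of_le' hk
  rfl

theorem stmt_16_general {M : Type*} [MetricSpace M]
    (G : SimpleGraph M) (hG : G.IsTree)
    (E : List (Sym2 M)) (hE : ∀ e, e ∈ E ↔ e ∈ G.edgeSet)
    (hsorted : (E.map edgeLen).Pairwise (· ≥ ·))
    {k : ℕ} (hk1 : 1 ≤ k)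
    (P : Fin (k + 1) → Set M) (hP : IsPartition P) :
    alphaD P ≤ edgeLenAt E k := by
  obtain ⟨c, hc, hmem⟩ := hP.exists_surjective_index
  obtain ⟨s, hcard, hs⟩ := hG.connected.exists_crossing_edges hc
  have hcount : k ≤ E.countP fun e => alphaD P ≤ edgeLen e := by
    refine le_trans (by simpa using hcard) (List.card_le_countP fun e he => ?_)
    obtain ⟨x, y, hxy, hcxy, rfl⟩ := hs e he
    exact ⟨(hE _).2 hxy, decide_eq_true (alphaD_le_dist P hcxy (hmem x) (hmem y))⟩
  rw [edgeLenAt_eq_getD E hk1]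
  refine hsorted.le_getD_of_lt_countP ?_
  rw [List.countP_map]
  exact Nat.sub_one_lt_of_le hk1 hcount

theorem stmt_16 {M : Type*} [MetricSpace M] [Fintype M] (hn : 2 ≤ Fintype.card M)
    (G : SimpleGraph M) (hG : G.IsTree)
    (hmin : ∀ T : SimpleGraph M, T.IsTree → graphLength G ≤ graphLength T)
    (E : List (Sym2 M)) (hE : ∀ e, e ∈ E ↔ e ∈ G.edgeSet) (hnd : E.Nodup)
    (hsorted : (E.map edgeLen).Pairwise (· ≥ ·))
    {k : ℕ} (hk1 : 1 ≤ k) (hk2 : k ≤ E.length)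
    (P : Fin (k + 1) → Set M) (hP : IsPartition P) :
    alphaD P ≤ edgeLenAt E k :=
  stmt_16_general G hG E hE hsorted hk1 P hP
end

section
/- Let M be a finite metric space and G a maximum spanning tree on M with edges ordered by non-decreasing length e₁,…,e_{n-1}, so that |eᵢ| is the i-th smallest edge length. For each k, let {M₁,…,M_{k+1}} be the partition of M into vertex sets of the trees of the forest G \ {e₁,…,eₖ}. Then for every i ≠ j, sup{dist(x,y) : x ∈ Mᵢ, y ∈ Mⱼ} ≤ |eₖ|. -/
open scoped Classical

private lemma sym2_exists_rep {α : Type*} (e : Sym2 α) : ∃ u v, e = s(u, v) :=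
  Sym2.ind (fun u v => ⟨u, v, rfl⟩) e

/-- Splitting a path at an edge: if `s(u,v)` lies on a path from `x` to `y`, then (in one of the
two orientations) there are walks `x → u` and `v → y` avoiding the edge `s(u,v)`. -/
private lemma walk_split {V : Type*} {G : SimpleGraph V} {u v : V} :
    ∀ {x y : V} (w : G.Walk x y), w.IsPath → s(u, v) ∈ w.edges →
      (∃ (w1 : G.Walk x u) (w2 : G.Walk v y), s(u, v) ∉ w1.edges ∧ s(u, v) ∉ w2.edges) ∨
      (∃ (w1 : G.Walk x v) (w2 : G.Walk u y), s(u, v) ∉ w1.edges ∧ s(u, v) ∉ w2.edges) := by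
  intro x y w
  induction w with
  | nil => simp
  | @cons a b c h p ih =>
    intro hp he
    rw [SimpleGraph.Walk.cons_isPath_iff] at hp
    by_cases heq : s(u, v) = s(a, b)
    · rw [Sym2.eq_iff] at heq
      rcases heq with ⟨rfl, rfl⟩ | ⟨rfl, rfl⟩
      · exact Or.inl ⟨.nil, p, by simp, fun hm =>
          hp.2 (SimpleGraph.Walk.fst_mem_support_of_mem_edges p hm)⟩
      · exact Or.inr ⟨.nil, p, by simp, fun hm =>
          hp.2 (SimpleGraph.Walk.snd_mem_support_of_mem_edges p hm)⟩
    · have he' : s(u, v) ∈ p.edges := by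
        rw [SimpleGraph.Walk.edges_cons, List.mem_cons] at he
        exact he.resolve_left heq
      rcases ih hp.1 he' with ⟨w1, w2, h1, h2⟩ | ⟨w1, w2, h1, h2⟩
      · exact Or.inl ⟨.cons h w1, w2, by simp [heq, h1], h2⟩
      · exact Or.inr ⟨.cons h w1, w2, by simp [heq, h1], h2⟩

theorem stmt_17 {M : Type*} [MetricSpace M] [Fintype M] (hn : 2 ≤ Fintype.card M)
    (G : SimpleGraph M) (hG : G.IsTree)
    (hmax : ∀ T : SimpleGraph M, T.IsTree → graphLength T ≤ graphLength G)
    (E : List (Sym2 M)) (hE : ∀ e, e ∈ E ↔ e ∈ G.edgeSet) (hnd : E.Nodup)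
    (hsorted : (E.map edgeLen).Pairwise (· ≤ ·))
    {k : ℕ} (hk1 : 1 ≤ k) (hk2 : k ≤ E.length)
    (x y : M) (hxy : ¬(G.deleteEdges {e | e ∈ E.take k}).Reachable x y) :
    dist x y ≤ edgeLenAt E k := by
  classical
  obtain ⟨k', rfl⟩ : ∃ k'', k = k'' + 1 := ⟨k - 1, (Nat.succ_pred_eq_of_pos hk1).symm⟩
  have hk' : k' < E.length := hk2
  have hlenAt : edgeLenAt E (k' + 1) = edgeLen (E.get ⟨k', hk'⟩) := by
    show (E.map edgeLen).getD k' 0 = _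
    rw [List.getD_eq_getElem _ _ (by simpa using hk')]
    simp
  have hbound : ∀ e ∈ E.take (k' + 1), edgeLen e ≤ edgeLenAt E (k' + 1) := by
    intro e he
    rw [List.mem_take_iff_getElem] at he
    obtain ⟨i, hi, rfl⟩ := he
    have hiE : i < E.length := lt_of_lt_of_le (lt_min_iff.mp hi).1 hk2
    have hmap : i < (E.map edgeLen).length := by simpa using hiE
    have hmap' : k' < (E.map edgeLen).length := by simpa using hk'
    have := hsorted.rel_get_of_le (a := ⟨i, hmap⟩) (b := ⟨k', hmap'⟩)
      (by simpa using Nat.lt_succ_iff.mp (lt_min_iff.mp hi).1)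
    rw [hlenAt]
    simpa using this
  -- get the unique path from x to y
  obtain ⟨w, hwpath, hwuniq⟩ := hG.existsUnique_path x y
  have hxny : x ≠ y := fun h => hxy (h ▸ SimpleGraph.Reachable.refl x)
  -- find a deleted edge on the path
  have hex : ∃ e ∈ w.edges, e ∈ E.take (k' + 1) := by
    by_contra h
    push_neg at h
    exact hxy ⟨w.toDeleteEdges _ (fun e he hmem => h e he hmem)⟩
  obtain ⟨e, hew, heS⟩ := hex
  obtain ⟨u, v, rfl⟩ := sym2_exists_rep e
  have hadj : G.Adj u v := w.edges_subset_edgeSet hew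
  -- x and y are not reachable in G minus the edge s(u,v)
  have hone : ¬(G.deleteEdges {s(u, v)}).Reachable x y := by
    rintro ⟨p⟩
    obtain ⟨q, hq⟩ := p.toPath
    have hqe : ∀ f ∈ q.edges, f ∈ G.edgeSet \ {s(u, v)} := by
      intro f hf
      have := q.edges_subset_edgeSet hf
      rwa [SimpleGraph.edgeSet_deleteEdges] at this
    have hq'path : (q.transfer G (fun f hf => (hqe f hf).1)).IsPath := hq.transfer _
    have heqw : q.transfer G (fun f hf => (hqe f hf).1) = w := hwuniq _ hq'path
    have : s(u, v) ∈ (q.transfer G (fun f hf => (hqe f hf).1)).edges := heqw ▸ hew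
    rw [SimpleGraph.Walk.edges_transfer] at this
    exact (hqe _ this).2 rfl
  -- the exchanged graph T
  set T : SimpleGraph M :=
    (G.deleteEdges {s(u, v)}) ⊔ SimpleGraph.fromEdgeSet {s(x, y)} with hT
  have hTxy : T.Adj x y := Or.inr ((SimpleGraph.fromEdgeSet_adj _).mpr ⟨rfl, hxny⟩)
  have hle : G.deleteEdges {s(u, v)} ≤ T := le_sup_left
  have hlift : ∀ {a b : M} (p : G.Walk a b), s(u, v) ∉ p.edges → T.Reachable a b := by
    intro a b p hp
    exact ⟨(p.toDeleteEdges {s(u, v)} (fun f hf => by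
      intro hf'; rw [Set.mem_singleton_iff] at hf'; exact hp (hf' ▸ hf))).mapLe hle⟩
  have huvT : T.Reachable u v := by
    rcases walk_split w hwpath hew with ⟨w1, w2, h1, h2⟩ | ⟨w1, w2, h1, h2⟩
    · exact ((hlift w1 h1).symm.trans hTxy.reachable).trans (hlift w2 h2).symm
    · exact (((hlift w1 h1).symm.trans hTxy.reachable).trans (hlift w2 h2).symm).symm
  -- T is connected
  have hpre : ∀ {a b : M}, G.Walk a b → T.Reachable a b := by
    intro a b p
    induction p with
    | nil => exact SimpleGraph.Reachable.refl _
    | @cons a c b h q ih =>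
      refine SimpleGraph.Reachable.trans ?_ ih
      by_cases hcase : s(a, c) = s(u, v)
      · rw [Sym2.eq_iff] at hcase
        rcases hcase with ⟨rfl, rfl⟩ | ⟨rfl, rfl⟩
        · exact huvT
        · exact huvT.symm
      · exact SimpleGraph.Adj.reachable
          (Or.inl (SimpleGraph.deleteEdges_adj.mpr ⟨h, by simpa using hcase⟩))
  have hTconn : T.Connected := by
    rw [SimpleGraph.connected_iff]
    exact ⟨fun a b => hpre ((hG.isConnected.preconnected a b).some), ⟨x⟩⟩
  -- the edge set of T
  have hTedge : T.edgeSet = (G.edgeSet \ {s(u, v)}) ∪ {s(x, y)} := by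
    rw [hT, SimpleGraph.edgeSet_sup, SimpleGraph.edgeSet_deleteEdges,
      SimpleGraph.edgeSet_fromEdgeSet]
    congr 1
    ext f
    constructor
    · exact fun hf => hf.1
    · rintro rfl
      exact ⟨rfl, by simp [hxny]⟩
  -- T is acyclic
  have hTac : T.IsAcyclic := by
    intro a c hc
    by_cases hmem : s(x, y) ∈ c.edges
    · have hnr : ¬(T \ SimpleGraph.fromEdgeSet {s(x, y)}).Reachable x y := by
        intro hr
        refine hone (hr.mono ?_)
        intro a b hab
        rw [SimpleGraph.sdiff_adj] at hab
        rcases hab.1 with h' | h'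
        · exact h'
        · exact absurd h' hab.2
      have hbridge : T.IsBridge s(x, y) := SimpleGraph.isBridge_iff.mpr hnr
      exact (SimpleGraph.isBridge_iff_adj_and_forall_cycle_notMem hTxy).mp hbridge c hc hmem
    · have hce : ∀ f ∈ c.edges, f ∈ G.edgeSet := by
        intro f hf
        have := c.edges_subset_edgeSet hf
        rw [hTedge] at this
        rcases this with h' | h'
        · exact h'.1
        · exact absurd (h' ▸ hf) hmem
      exact hG.IsAcyclic (c.transfer G hce) (hc.transfer hce)
  have hTtree : T.IsTree := ⟨hTconn, hTac⟩
  -- the case where the new edge equals the removed one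
  by_cases hsame : s(x, y) = s(u, v)
  · have : dist x y = edgeLen s(u, v) := by rw [← hsame]; simp [edgeLen]
    rw [this]
    exact hbound _ heS
  · have hxyG : s(x, y) ∉ G.edgeSet := by
      intro hmem
      exact hone (SimpleGraph.Adj.reachable
        (SimpleGraph.deleteEdges_adj.mpr ⟨hmem, by simpa using hsame⟩))
    -- length computation
    have hfin : T.edgeSet.toFinite.toFinset
        = insert s(x, y) (G.edgeSet.toFinite.toFinset.erase s(u, v)) := by
      ext f
      simp only [Set.Finite.mem_toFinset, Finset.mem_insert, Finset.mem_erase, hTedge,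
        Set.mem_union, Set.mem_diff, Set.mem_singleton_iff]
      tauto
    have heG : s(u, v) ∈ G.edgeSet.toFinite.toFinset := by
      rw [Set.Finite.mem_toFinset]; exact hadj
    have hnotin : s(x, y) ∉ G.edgeSet.toFinite.toFinset.erase s(u, v) := by
      intro hmem
      exact hxyG (Set.Finite.mem_toFinset _ |>.mp (Finset.mem_of_mem_erase hmem))
    have hsumG : ∑ f ∈ G.edgeSet.toFinite.toFinset.erase s(u, v), edgeLen f + edgeLen s(u, v)
        = graphLength G := Finset.sum_erase_add _ _ heG
    have hsumT : graphLength T = edgeLen s(x, y)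
        + ∑ f ∈ G.edgeSet.toFinite.toFinset.erase s(u, v), edgeLen f := by
      show ∑ f ∈ T.edgeSet.toFinite.toFinset, edgeLen f = _
      rw [hfin, Finset.sum_insert hnotin]
    have hmaxT := hmax T hTtree
    have hxylen : edgeLen s(x, y) = dist x y := by simp [edgeLen]
    have huvlen : edgeLen s(u, v) ≤ edgeLenAt E (k' + 1) := hbound _ heS
    rw [hsumT, hxylen] at hmaxT
    linarith
end

section
/- Let M be a finite metric space and G a maximum spanning tree on M with edges ordered so |e₁| ≤ … ≤ |e_{n-1}|. For each k, let {M₁,…,M_{k+1}} be the partition of M into vertex sets of components of G \ {e_{n-k},…,e_{n-1}} (removing the k longest edges). Then diam Mᵢ ≤ |e_{n-k-1}| for every i. -/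
open scoped Classical

/-!
Every edge `e` of the tree path between `x` and `y` satisfies `dist x y ≤ |e|`: otherwise
replacing `e` by the edge `s(x, y)` yields a spanning tree of larger total length. If `x` and `y`
are joined in the forest left after removing the `k` longest edges, the tree path between them
uses only the `n - 1 - k` shortest edges, each of length at most `|e_{n-k-1}|`.
-/

namespace SimpleGraph

variable {V : Type*} {G : SimpleGraph V}

theorem Reachable.deleteEdges_reachable_or {u c : V} (h : G.Reachable u c) (d : V) :
    (G.deleteEdges {s(c, d)}).Reachable u c ∨ (G.deleteEdges {s(c, d)}).Reachable u d := by
  classical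
  obtain ⟨p, hp⟩ := h.exists_isPath
  simp only [reachable_deleteEdges_iff_exists_walk]
  by_cases hd : d ∈ p.support
  · rcases eq_or_ne c d with rfl | hcd
    · exact .inl ⟨p, fun he => (p.adj_of_mem_edges he).ne rfl⟩
    · exact .inr ⟨p.takeUntil d hd, fun he =>
        Walk.endpoint_notMem_support_takeUntil hp hd hcd (Walk.fst_mem_support_of_mem_edges _ he)⟩
  · exact .inl ⟨p, fun he => hd (Walk.snd_mem_support_of_mem_edges _ he)⟩

theorem IsAcyclic.not_reachable_deleteEdges_of_mem_edges (hG : G.IsAcyclic) {x y : V}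
    {p : G.Walk x y} (hp : p.IsPath) {e : Sym2 V} (he : e ∈ p.edges) :
    ¬(G.deleteEdges {e}).Reachable x y := by
  classical
  rintro ⟨q⟩
  let q' := q.mapLe (G.deleteEdges_le {e})
  have hpq : p = q'.bypass :=
    congrArg Subtype.val ((hG.subsingleton_path x y).elim ⟨p, hp⟩ ⟨_, q'.bypass_isPath⟩)
  have heq : e ∈ q.edges := by
    rw [← Walk.edges_mapLe_eq_edges (G.deleteEdges_le {e})]
    exact Walk.edges_bypass_subset_edges _ (hpq ▸ he)
  simpa using q.edges_subset_edgeSet heq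

theorem IsTree.deleteEdges_sup_edge (hG : G.IsTree) {x y : V} {p : G.Walk x y} (hp : p.IsPath)
    {e : Sym2 V} (he : e ∈ p.edges) : (G.deleteEdges {e} ⊔ edge x y).IsTree := by
  set H := G.deleteEdges {e}
  have hsep : ¬H.Reachable x y := hG.isAcyclic.not_reachable_deleteEdges_of_mem_edges hp he
  refine ⟨?_, (hG.isAcyclic.anti (G.deleteEdges_le _)).sup_edge_of_not_reachable hsep⟩
  have hHT : H ≤ H ⊔ edge x y := le_sup_left
  have hxy : (H ⊔ edge x y).Reachable x y :=
    Adj.reachable (Or.inr ((edge_adj ..).mpr ⟨.inl ⟨rfl, rfl⟩, fun h => hsep (h ▸ .rfl)⟩))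
  induction e with | h c d =>
  -- `x` and `y` reach different endpoints of the deleted edge, so the new edge reconnects them
  have hcd : (H ⊔ edge x y).Reachable c d := by
    rcases (hG.connected.preconnected x c).deleteEdges_reachable_or d with hx | hx <;>
    rcases (hG.connected.preconnected y c).deleteEdges_reachable_or d with hy | hy
    · exact absurd (hx.trans hy.symm) hsep
    · exact ((hx.mono hHT).symm.trans hxy).trans (hy.mono hHT)
    · exact ((hy.mono hHT).symm.trans hxy.symm).trans (hx.mono hHT)
    · exact absurd (hx.trans hy.symm) hsep
  refine (connected_iff_exists_forall_reachable _).mpr ⟨c, fun u => ?_⟩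
  rcases (hG.connected.preconnected u c).deleteEdges_reachable_or d with hu | hu
  · exact (hu.mono hHT).symm
  · exact hcd.trans (hu.mono hHT).symm

end SimpleGraph

open SimpleGraph

section MaxSpanningTree

variable {M : Type*} [MetricSpace M]

lemma edgeLenAt_nonneg (E : List (Sym2 M)) : ∀ n, 0 ≤ edgeLenAt E n
  | 0 => le_rfl
  | i + 1 => by
    rw [edgeLenAt, List.getD_eq_getElem?_getD]
    cases h : (E.map edgeLen)[i]? with
    | none => exact le_rfl
    | some a =>
      obtain ⟨e, -, rfl⟩ := List.mem_map.mp (List.mem_of_getElem? h)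
      induction e with | h x y => exact dist_nonneg

lemma edgeLen_le_edgeLenAt_of_notMem_drop {E : List (Sym2 M)}
    (hsorted : (E.map edgeLen).Pairwise (· ≤ ·)) {m : ℕ} (hm : m ≤ E.length) {e : Sym2 M}
    (he : e ∈ E) (hdrop : e ∉ E.drop m) : edgeLen e ≤ edgeLenAt E m := by
  obtain _ | j := m
  · exact absurd he hdrop
  have htake : edgeLen e ∈ (E.map edgeLen).take (j + 1) := by
    rw [← List.take_append_drop (j + 1) E, List.mem_append] at he
    rw [← List.map_take]
    exact List.mem_map_of_mem (he.resolve_right hdrop)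
  have hj : j < (E.map edgeLen).length := by simpa using hm
  have := (hsorted.take (i := j + 1)).rel_getLast htake
  simpa [edgeLenAt, List.getLast_take, List.getD_eq_getElem _ _ hj, List.getElem?_eq_getElem hj]
    using this

variable [Fintype M]

lemma graphLength_deleteEdges_sup_edge {G : SimpleGraph M} {e : Sym2 M} (he : e ∈ G.edgeSet)
    {x y : M} (hxy : x ≠ y) (hxyG : ¬G.Adj x y) :
    graphLength (G.deleteEdges {e} ⊔ edge x y) = graphLength G - edgeLen e + dist x y := by
  have hedges : (G.deleteEdges {e} ⊔ edge x y).edgeSet.toFinite.toFinset =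
      insert s(x, y) (G.edgeSet.toFinite.toFinset.erase e) := by
    ext f
    simp [edgeSet_sup, edgeSet_edge_of_ne hxy, edgeSet_deleteEdges, and_comm]
  have hnew : s(x, y) ∉ G.edgeSet.toFinite.toFinset.erase e := by simpa using fun _ => hxyG
  rw [graphLength, hedges, Finset.sum_insert hnew, Finset.sum_erase_eq_sub (by simpa using he)]
  simp only [graphLength, edgeLen, Sym2.lift_mk]
  ring

variable {G : SimpleGraph M} (hG : G.IsTree)
  (hmax : ∀ T : SimpleGraph M, T.IsTree → graphLength T ≤ graphLength G)
include hG hmax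

theorem dist_le_edgeLen_of_mem_edges {x y : M} {p : G.Walk x y} (hp : p.IsPath) {e : Sym2 M}
    (he : e ∈ p.edges) : dist x y ≤ edgeLen e := by
  have hsep := hG.isAcyclic.not_reachable_deleteEdges_of_mem_edges hp he
  by_cases hadj : G.Adj x y
  · obtain rfl : e = s(x, y) := by
      by_contra hne
      exact hsep ((deleteEdges_adj ..).mpr ⟨hadj, by simpa [eq_comm] using hne⟩).reachable
    exact le_rfl
  have hxy : x ≠ y := fun h => hsep (h ▸ .rfl)
  have := hmax _ (hG.deleteEdges_sup_edge hp he)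
  rw [graphLength_deleteEdges_sup_edge (p.edges_subset_edgeSet he) hxy hadj] at this
  linarith

theorem exists_mem_edgeSet_dist_le_edgeLen {H : SimpleGraph M} (hH : H ≤ G) {x y : M}
    (hxy : H.Reachable x y) (hne : x ≠ y) : ∃ e ∈ H.edgeSet, dist x y ≤ edgeLen e := by
  obtain ⟨p, hp⟩ := hxy.exists_isPath
  cases p with
  | nil => exact absurd rfl hne
  | cons h _ =>
    refine ⟨s(x, _), h, dist_le_edgeLen_of_mem_edges hG hmax (hp.mapLe hH) ?_⟩
    simp

end MaxSpanningTree

theorem stmt_18_general {M : Type*} [MetricSpace M] [Fintype M]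
    (G : SimpleGraph M) (hG : G.IsTree)
    (hmax : ∀ T : SimpleGraph M, T.IsTree → graphLength T ≤ graphLength G)
    (E : List (Sym2 M)) (hE : ∀ e, e ∈ E ↔ e ∈ G.edgeSet)
    (hsorted : (E.map edgeLen).Pairwise (· ≤ ·))
    {k : ℕ} (x y : M) (hxy : (G.deleteEdges {e | e ∈ E.drop (E.length - k)}).Reachable x y) :
    dist x y ≤ edgeLenAt E (E.length - k) := by
  rcases eq_or_ne x y with rfl | hne
  · simpa using edgeLenAt_nonneg E _
  obtain ⟨e, he, hdist⟩ :=
    exists_mem_edgeSet_dist_le_edgeLen hG hmax (G.deleteEdges_le _) hxy hne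
  rw [edgeSet_deleteEdges] at he
  exact hdist.trans <| edgeLen_le_edgeLenAt_of_notMem_drop hsorted (Nat.sub_le _ _)
    ((hE e).mpr he.1) he.2

theorem stmt_18 {M : Type*} [MetricSpace M] [Fintype M] (hn : 2 ≤ Fintype.card M)
    (G : SimpleGraph M) (hG : G.IsTree)
    (hmax : ∀ T : SimpleGraph M, T.IsTree → graphLength T ≤ graphLength G)
    (E : List (Sym2 M)) (hE : ∀ e, e ∈ E ↔ e ∈ G.edgeSet) (hnd : E.Nodup)
    (hsorted : (E.map edgeLen).Pairwise (· ≤ ·))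
    {k : ℕ} (hk1 : 1 ≤ k) (hk2 : k ≤ E.length)
    (x y : M) (hxy : (G.deleteEdges {e | e ∈ E.drop (E.length - k)}).Reachable x y) :
    dist x y ≤ edgeLenAt E (E.length - k) :=
  stmt_18_general G hG hmax E hE hsorted x y hxy
end
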